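/- arXiv:2008.02780 — 8 statements merged into one kernel-verified Lean document; each statement's English description precedes it below -/
import Mathlib

section
/- For any n ≥ k ≥ 1, every n-vertex graph with no path of length k (i.e., no path with k edges) has at most (k-1)n/2 edges. -/
/-!
Write `d_s(v) = #{w ∈ s | G.Adj v w}` for the degree of `v` in the induced subgraph `G[s]`; the
sum of these over `s` is twice the number of edges of `G[s]`, and we bound it by `(k - 1) #s` by
strong induction on `s`. If some vertex has `2 d_s(v) < k`, delete it. Otherwise take a longest
path `L` of `G[s]`; it has at most `k` vertices. Its endpoints have all their neighbours on `L` and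
degree sum at least `|L|`, so by pigeonhole `L = P ++ Q` where the last vertex of `P` is adjacent
to the end of `L` and the first vertex of `Q` to its start; then `P ++ Q.reverse` is a cycle on the
vertices of `L`. An edge leaving this cycle would give a path longer than `L`, so the vertices of
`L` span a union of components of `G[s]` whose degrees are at most `|L| - 1 ≤ k - 1`; remove them
and induct.
-/

open Finset

theorem List.exists_append_getLast_mem_head_mem {α : Type*} [DecidableEq α] {L : List α}
    (hne : L ≠ []) {A B : Finset α} (hA : ∀ y ∈ A, y ∈ L ∧ y ≠ L.head hne)
    (hB : ∀ z ∈ B, z ∈ L ∧ z ≠ L.getLast hne) (hcard : L.length ≤ #A + #B) :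
    ∃ (P Q : List α) (hP : P ≠ []) (hQ : Q ≠ []),
      L = P ++ Q ∧ P.getLast hP ∈ B ∧ Q.head hQ ∈ A := by
  -- Positions `idxOf y` for `y ∈ A` and `idxOf z + 1` for `z ∈ B` all lie in `(0, |L|)`, so two
  -- of them coincide: `z` sits right before `y`.
  have hidx {y : α} (hy : y ∈ L) : L[L.idxOf y]'(idxOf_lt_length_of_mem hy) = y :=
    getElem_idxOf _
  have hA' : A.image L.idxOf ⊆ Ioo 0 L.length := by
    intro j hj
    obtain ⟨y, hy, rfl⟩ := mem_image.1 hj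
    obtain ⟨hyL, hya⟩ := hA y hy
    refine mem_Ioo.2 ⟨Nat.pos_of_ne_zero fun h0 => hya ?_, idxOf_lt_length_of_mem hyL⟩
    rw [head_eq_getElem, ← hidx hyL]
    simp only [h0]
  have hB' : B.image (L.idxOf · + 1) ⊆ Ioo 0 L.length := by
    intro j hj
    obtain ⟨z, hz, rfl⟩ := mem_image.1 hj
    obtain ⟨hzL, hzb⟩ := hB z hz
    have hlt := idxOf_lt_length_of_mem hzL
    refine mem_Ioo.2 ⟨Nat.succ_pos _, ?_⟩
    by_contra! hge
    apply hzb
    rw [getLast_eq_getElem, ← hidx hzL]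
    simp only [show L.idxOf z = L.length - 1 by omega]
  have hinjA : Set.InjOn L.idxOf A := fun y hy _ _ h => (idxOf_inj (hA y hy).1).1 h
  have hinjB : Set.InjOn (L.idxOf · + 1) B := fun z hz _ _ h =>
    (idxOf_inj (hB z hz).1).1 (Nat.succ_injective h)
  obtain ⟨j, hj⟩ := inter_nonempty_of_card_lt_card_add_card hA' hB' <| by
    rw [card_image_of_injOn hinjA, card_image_of_injOn hinjB, Nat.card_Ioo]
    have := length_pos_iff.2 hne
    omega
  obtain ⟨⟨y, hyA, rfl⟩, z, hzB, hzy⟩ := by simpa only [mem_inter, mem_image] using hj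
  have hyL := (hA y hyA).1
  have hzL := (hB z hzB).1
  have hlt := idxOf_lt_length_of_mem hyL
  have hP : L.take (L.idxOf z + 1) ≠ [] := by simp [hne]
  have hQ : L.drop (L.idxOf z + 1) ≠ [] := by simp; omega
  refine ⟨_, _, hP, hQ, (take_append_drop _ _).symm, ?_, ?_⟩
  · simpa [getLast_take, getElem?_eq_getElem (idxOf_lt_length_of_mem hzL), hidx hzL] using hzB
  · simpa [head_drop, hzy, hidx hyL] using hyA

theorem Cycle.Chain.exists_cons_perm_isChain {α : Type*} {r : α → α → Prop} {C : List α}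
    (h : Cycle.Chain r ↑C) {x : α} (hx : x ∈ C) :
    ∃ R : List α, (x :: R).Perm C ∧ (x :: R).IsChain r := by
  obtain ⟨C₁, C₂, rfl⟩ := List.append_of_mem hx
  rw [Cycle.coe_eq_coe.2 List.isRotated_append, List.cons_append, Cycle.chain_coe_cons] at h
  refine ⟨C₂ ++ C₁, List.perm_append_comm (l₁ := x :: C₂), ?_⟩
  exact List.IsChain.left_of_append (l₂ := [x]) h

namespace SimpleGraph

variable {V : Type*} {G : SimpleGraph V}

theorem cycle_chain_append_reverse {P Q : List V} (hP : P ≠ []) (hQ : Q ≠ [])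
    (h : (P ++ Q).IsChain G.Adj) (hlast : G.Adj (P.getLast hP) (Q.getLast hQ))
    (hhead : G.Adj (Q.head hQ) (P.head hP)) : Cycle.Chain G.Adj ↑(P ++ Q.reverse) := by
  obtain ⟨a, P, rfl⟩ := List.exists_cons_of_ne_nil hP
  rw [List.cons_append, Cycle.chain_coe_cons, List.append_assoc, ← List.cons_append]
  have hQr : Q.reverse.IsChain G.Adj :=
    List.isChain_reverse.2 (h.right_of_append.imp fun _ _ hxy => hxy.symm)
  refine h.left_of_append.append (hQr.append (List.isChain_singleton a) ?_) ?_
  · simpa [List.getLast?_reverse, List.head?_eq_some_head hQ] using hhead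
  · simpa [List.head?_reverse, List.getLast?_eq_some_getLast hQ,
      List.getLast?_eq_some_getLast hP] using hlast

theorem exists_isPath_length_of_isChain {L : List V} (hc : L.IsChain G.Adj) (hn : L.Nodup)
    {k : ℕ} (hk : k < L.length) : ∃ (u w : V) (p : G.Walk u w), p.IsPath ∧ p.length = k := by
  have hne : L.take (k + 1) ≠ [] := List.ne_nil_of_length_pos (by simp; omega)
  refine ⟨_, _, Walk.ofSupport _ hne (hc.take _), ?_, ?_⟩
  · rw [Walk.isPath_def, Walk.support_ofSupport]
    exact hn.sublist (List.take_sublist _ _)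
  · rw [Walk.length_ofSupport, List.length_take]
    omega

/-- Paths of the induced subgraph `G[s]`, as vertex lists: unlike walks, these can be cut,
reversed and rotated freely. -/
structure IsPathIn (G : SimpleGraph V) (s : Finset V) (L : List V) : Prop where
  isChain : L.IsChain G.Adj
  nodup : L.Nodup
  subset : ∀ x ∈ L, x ∈ s

theorem IsPathIn.reverse {s : Finset V} {L : List V} (h : G.IsPathIn s L) :
    G.IsPathIn s L.reverse :=
  ⟨List.isChain_reverse.2 (h.isChain.imp fun _ _ hxy => hxy.symm),
    List.nodup_reverse.2 h.nodup, fun x hx => h.subset x (List.mem_reverse.1 hx)⟩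

theorem IsPathIn.length_le_card [DecidableEq V] {s : Finset V} {L : List V}
    (h : G.IsPathIn s L) : L.length ≤ #s := by
  rw [← List.toFinset_card_of_nodup h.nodup]
  exact card_le_card fun x hx => h.subset x (List.mem_toFinset.1 hx)

theorem exists_isPathIn_forall_length_le (s : Finset V) :
    ∃ L, G.IsPathIn s L ∧ ∀ M, G.IsPathIn s M → M.length ≤ L.length := by
  classical
  let P m := ∃ L, G.IsPathIn s L ∧ L.length = m
  obtain ⟨L, hL, hlen⟩ : P (Nat.findGreatest P #s) :=
    Nat.findGreatest_spec (Nat.zero_le _) ⟨[], ⟨List.isChain_nil, List.nodup_nil, by simp⟩, rfl⟩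
  exact ⟨L, hL, fun M hM => hlen ▸ Nat.le_findGreatest hM.length_le_card ⟨M, hM, rfl⟩⟩

section Longest

variable {s : Finset V} {L : List V}

theorem IsPathIn.mem_of_adj_head (hL : G.IsPathIn s L)
    (hmax : ∀ M, G.IsPathIn s M → M.length ≤ L.length) (hne : L ≠ []) {y : V} (hy : y ∈ s)
    (hadj : G.Adj (L.head hne) y) : y ∈ L := by
  by_contra hyL
  obtain ⟨a, T, rfl⟩ := List.exists_cons_of_ne_nil hne
  have := hmax (y :: a :: T) ⟨List.isChain_cons_cons.2 ⟨hadj.symm, hL.isChain⟩,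
    List.nodup_cons.2 ⟨hyL, hL.nodup⟩, by simpa [hy] using hL.subset⟩
  simp at this

theorem IsPathIn.mem_of_adj_getLast (hL : G.IsPathIn s L)
    (hmax : ∀ M, G.IsPathIn s M → M.length ≤ L.length) (hne : L ≠ []) {y : V} (hy : y ∈ s)
    (hadj : G.Adj (L.getLast hne) y) : y ∈ L :=
  List.mem_reverse.1 <| hL.reverse.mem_of_adj_head (by simpa using hmax)
    (List.reverse_ne_nil_iff.2 hne) hy (by rwa [List.head_reverse])

variable [DecidableEq V] [DecidableRel G.Adj]

theorem exists_perm_cycle_chain (hc : L.IsChain G.Adj) (hne : L ≠ [])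
    (ha : ∀ y ∈ s, G.Adj (L.head hne) y → y ∈ L) (hb : ∀ y ∈ s, G.Adj (L.getLast hne) y → y ∈ L)
    (hdeg : L.length ≤ #{y ∈ s | G.Adj (L.head hne) y} + #{y ∈ s | G.Adj (L.getLast hne) y}) :
    ∃ C : List V, C.Perm L ∧ Cycle.Chain G.Adj ↑C := by
  have hmem {u : V} (hu : ∀ y ∈ s, G.Adj u y → y ∈ L) :
      ∀ y ∈ ({y ∈ s | G.Adj u y} : Finset V), y ∈ L ∧ y ≠ u := fun y hy =>
    ⟨hu y (mem_filter.1 hy).1 (mem_filter.1 hy).2, (G.ne_of_adj (mem_filter.1 hy).2).symm⟩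
  obtain ⟨P, Q, hP, hQ, rfl, hPb, haQ⟩ :=
    List.exists_append_getLast_mem_head_mem hne (hmem ha) (hmem hb) hdeg
  refine ⟨P ++ Q.reverse, (List.reverse_perm Q).append_left P,
    cycle_chain_append_reverse hP hQ hc ?_ ?_⟩
  · simpa [List.getLast_append_of_ne_nil hne hQ] using (mem_filter.1 hPb).2.symm
  · simpa [List.head_append_of_ne_nil hP] using (mem_filter.1 haQ).2.symm

theorem IsPathIn.mem_of_adj (hL : G.IsPathIn s L)
    (hmax : ∀ M, G.IsPathIn s M → M.length ≤ L.length)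
    (hdeg : ∀ v ∈ s, L.length ≤ 2 * #{w ∈ s | G.Adj v w}) {x y : V} (hx : x ∈ L) (hy : y ∈ s)
    (hxy : G.Adj x y) : y ∈ L := by
  by_contra hyL
  have hne := List.ne_nil_of_mem hx
  obtain ⟨C, hCL, hC⟩ := exists_perm_cycle_chain hL.isChain hne
    (fun _ => hL.mem_of_adj_head hmax hne) (fun _ => hL.mem_of_adj_getLast hmax hne) <| by
      have := hdeg _ (hL.subset _ (List.head_mem hne))
      have := hdeg _ (hL.subset _ (List.getLast_mem hne))
      omega
  obtain ⟨R, hRC, hR⟩ := hC.exists_cons_perm_isChain (hCL.mem_iff.2 hx)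
  have hRL := hRC.trans hCL
  have := hmax (y :: x :: R) ⟨List.isChain_cons_cons.2 ⟨hxy.symm, hR⟩,
    List.nodup_cons.2 ⟨fun h => hyL (hRL.subset h), hRL.nodup_iff.2 hL.nodup⟩,
    by simpa [hy] using fun z hz => hL.subset z (hRL.subset hz)⟩
  rw [List.length_cons, hRL.length_eq] at this
  omega

end Longest

section DegreeSum

variable [DecidableEq V] [DecidableRel G.Adj]

theorem sum_card_filter_adj_eq_of_subset {A s : Finset V} (h : A ⊆ s) :
    ∑ v ∈ s, #{w ∈ s | G.Adj v w} = ∑ v ∈ A, #{w ∈ A | G.Adj v w} +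
      ∑ v ∈ s \ A, #{w ∈ s \ A | G.Adj v w} + 2 * ∑ v ∈ A, #{w ∈ s \ A | G.Adj v w} := by
  have hsplit (v : V) :
      #{w ∈ s | G.Adj v w} = #{w ∈ A | G.Adj v w} + #{w ∈ s \ A | G.Adj v w} := by
    rw [← card_union_of_disjoint (disjoint_filter_filter disjoint_sdiff), ← filter_union,
      union_sdiff_of_subset h]
  have hsymm : ∑ v ∈ s \ A, #{w ∈ A | G.Adj v w} = ∑ v ∈ A, #{w ∈ s \ A | G.Adj v w} := by
    simpa only [bipartiteAbove, bipartiteBelow, adj_comm] using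
      sum_card_bipartiteAbove_eq_sum_card_bipartiteBelow G.Adj (s := s \ A) (t := A)
  rw [← sum_sdiff h]
  simp only [hsplit, sum_add_distrib]
  omega

theorem sum_card_filter_adj_le_mul (A : Finset V) :
    ∑ v ∈ A, #{w ∈ A | G.Adj v w} ≤ #A * (#A - 1) := by
  calc ∑ v ∈ A, #{w ∈ A | G.Adj v w} ≤ ∑ _v ∈ A, (#A - 1) := by
        refine sum_le_sum fun v hv => ?_
        rw [← card_erase_of_mem hv]
        exact card_le_card fun w hw =>
          mem_erase.2 ⟨(G.ne_of_adj (mem_filter.1 hw).2).symm, (mem_filter.1 hw).1⟩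
    _ = #A * (#A - 1) := by rw [sum_const, smul_eq_mul]

theorem sum_card_filter_adj_le_of_erase {s : Finset V} {v : V} {m : ℕ} (hv : v ∈ s)
    (hdeg : 2 * #{w ∈ s | G.Adj v w} ≤ m)
    (ih : ∑ u ∈ s.erase v, #{w ∈ s.erase v | G.Adj u w} ≤ m * #(s.erase v)) :
    ∑ u ∈ s, #{w ∈ s | G.Adj u w} ≤ m * #s := by
  have hv' := sum_card_filter_adj_le_mul (G := G) {v}
  have hcross : #{w ∈ s.erase v | G.Adj v w} ≤ #{w ∈ s | G.Adj v w} :=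
    card_le_card (filter_subset_filter _ (erase_subset v s))
  rw [sum_card_filter_adj_eq_of_subset (singleton_subset_iff.2 hv), sdiff_singleton_eq_erase,
    ← card_erase_add_one hv, mul_add_one]
  simp only [sum_singleton, card_singleton, Nat.sub_self, mul_zero, Nat.le_zero] at hv' ⊢
  omega

theorem sum_card_filter_adj_le_of_closed {s A : Finset V} {m : ℕ} (hA : A ⊆ s)
    (hAm : #A ≤ m + 1) (hclosed : ∀ v ∈ A, ∀ w ∈ s, G.Adj v w → w ∈ A)
    (ih : ∑ v ∈ s \ A, #{w ∈ s \ A | G.Adj v w} ≤ m * #(s \ A)) :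
    ∑ v ∈ s, #{w ∈ s | G.Adj v w} ≤ m * #s := by
  have hcross : ∑ v ∈ A, #{w ∈ s \ A | G.Adj v w} = 0 :=
    sum_eq_zero fun v hv => card_eq_zero.2 <| filter_eq_empty_iff.2 fun w hw hvw =>
      (mem_sdiff.1 hw).2 (hclosed v hv w (mem_sdiff.1 hw).1 hvw)
  have hinside : ∑ v ∈ A, #{w ∈ A | G.Adj v w} ≤ m * #A :=
    (sum_card_filter_adj_le_mul A).trans (by rw [mul_comm]; gcongr; omega)
  rw [sum_card_filter_adj_eq_of_subset hA, hcross, ← card_sdiff_add_card_eq_card hA]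
  linarith

theorem sum_card_filter_adj_le_of_forall_isPath_length_ne {k : ℕ}
    (hpath : ∀ (u w : V) (p : G.Walk u w), p.IsPath → p.length ≠ k) (s : Finset V) :
    ∑ v ∈ s, #{w ∈ s | G.Adj v w} ≤ (k - 1) * #s := by
  induction s using Finset.strongInduction with
  | H s ih =>
  by_cases hlow : ∃ v ∈ s, 2 * #{w ∈ s | G.Adj v w} < k
  · obtain ⟨v, hv, hdeg⟩ := hlow
    exact sum_card_filter_adj_le_of_erase hv (by omega) (ih _ (erase_ssubset hv))
  push Not at hlow
  obtain ⟨L, hL, hmax⟩ := G.exists_isPathIn_forall_length_le s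
  have hLk : L.length ≤ k := not_lt.1 fun hk =>
    have ⟨_, _, p, hp, hlen⟩ := exists_isPath_length_of_isChain hL.isChain hL.nodup hk
    hpath _ _ p hp hlen
  rcases s.eq_empty_or_nonempty with rfl | ⟨v, hv⟩
  · simp
  have hA : L.toFinset ⊆ s := fun x hx => hL.subset x (List.mem_toFinset.1 hx)
  have hLne : L ≠ [] := fun hnil => by
    simpa [hnil] using hmax [v] ⟨List.isChain_singleton v, List.nodup_singleton v, by simpa⟩
  refine sum_card_filter_adj_le_of_closed hA
    (by rw [List.toFinset_card_of_nodup hL.nodup]; omega)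
    (fun x hx y hy hxy => List.mem_toFinset.2 <| hL.mem_of_adj hmax
      (fun u hu => hLk.trans (hlow u hu)) (List.mem_toFinset.1 hx) hy hxy)
    (ih _ (sdiff_ssubset hA ?_))
  simpa [List.toFinset_eq_empty_iff] using hLne

end DegreeSum

end SimpleGraph

theorem erdos_gallai_path_general {V : Type*} [Fintype V]
    (G : SimpleGraph V) [DecidableRel G.Adj] (n k : ℕ)
    (hn : Fintype.card V = n)
    (hpath : ∀ (u w : V) (p : G.Walk u w), p.IsPath → p.length ≠ k) :
    2 * G.edgeFinset.card ≤ (k - 1) * n := by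
  classical
  rw [← SimpleGraph.sum_degrees_eq_twice_card_edges, ← hn, ← Finset.card_univ]
  simpa [← SimpleGraph.card_neighborFinset_eq_degree, SimpleGraph.neighborFinset_eq_filter] using
    SimpleGraph.sum_card_filter_adj_le_of_forall_isPath_length_ne hpath Finset.univ

/-- Erdős–Gallai theorem for paths: for `n ≥ k ≥ 1`, an `n`-vertex graph with no
path of length `k` (i.e. with `k` edges) has at most `(k-1)n/2` edges. -/
theorem erdos_gallai_path {V : Type*} [Fintype V] [DecidableEq V]
    (G : SimpleGraph V) [DecidableRel G.Adj] (n k : ℕ)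
    (hn : Fintype.card V = n) (hk : 1 ≤ k) (hkn : k ≤ n)
    (hpath : ∀ (u w : V) (p : G.Walk u w), p.IsPath → p.length ≠ k) :
    2 * G.edgeFinset.card ≤ (k - 1) * n :=
  erdos_gallai_path_general G n k hn hpath
end

section
/- Let H be a connected r-uniform hypergraph with minimum degree at least 2 whose longest Berge-path and longest Berge-cycle both have length ℓ-1, and let C be a Berge-cycle of length ℓ-1 in H with defining vertex set V. Then every hyperedge of H that is not a defining hyperedge of C contains at most one vertex outside V. -/
def IsBergePath {V : Type*} (H : Finset (Finset V)) (t : ℕ)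
    (v : Fin (t+1) → V) (e : Fin t → Finset V) : Prop :=
  Function.Injective v ∧ Function.Injective e ∧ (∀ i, e i ∈ H) ∧
    ∀ i : Fin t, v i.castSucc ∈ e i ∧ v i.succ ∈ e i

def HasBergePath {V : Type*} (H : Finset (Finset V)) (t : ℕ) : Prop :=
  ∃ v e, IsBergePath H t v e

def cnext {t : ℕ} (i : Fin t) : Fin t := ⟨(i.1 + 1) % t, Nat.mod_lt _ i.pos⟩

def cprev {t : ℕ} (i : Fin t) : Fin t := ⟨(i.1 + t - 1) % t, Nat.mod_lt _ i.pos⟩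

def IsBergeCycle {V : Type*} (H : Finset (Finset V)) (t : ℕ)
    (v : Fin t → V) (e : Fin t → Finset V) : Prop :=
  Function.Injective v ∧ Function.Injective e ∧ (∀ i, e i ∈ H) ∧
    ∀ i : Fin t, v i ∈ e i ∧ v (cnext i) ∈ e i

def HasBergeCycle {V : Type*} (H : Finset (Finset V)) (t : ℕ) : Prop :=
  ∃ v e, IsBergeCycle H t v e

def BergeConnected {V : Type*} (H : Finset (Finset V)) : Prop :=
  ∀ x y : V, x ≠ y → ∃ t v e, IsBergePath H t v e ∧ v 0 = x ∧ v (Fin.last t) = y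

/-!
Write `t = ℓ - 1`. Opening `C` at an edge `e k` gives a Berge path of length `t - 1` ending at
`v k`; continuing it by a path of length 2 that leaves `C` at `v k` and uses no other cycle vertex
or cycle edge would give a Berge path of length `t + 1`. Such a continuation exists if `h` has two
vertices `x ≠ y` off `C`. If `h` contains a cycle vertex `v j`, let `g ≠ h` be a second edge at `x`:
take `v i, e i, x, h, y` if `g = e i`, `v k, g, x, h, y` if `g` contains a cycle vertex `v k`, and
otherwise `v j, h, x, g, z` for some `z ∈ g` other than `x` (by uniformity `|g| = |h| ≥ 2`). If `h`
misses `C`, take a shortest Berge path from `C` to `h` (connectivity), followed by `h` and a vertex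
of `h` off `C` other than its endpoint.
-/

section

variable {V : Type*}

/-- A Berge path of length `n` indexed by `ℕ`; the values of `u` beyond `n` and of `f` from `n` on
are irrelevant. Cutting and concatenating such paths is arithmetic on `ℕ` rather than on `Fin`. -/
structure IsNatBergePath (H : Finset (Finset V)) (n : ℕ) (u : ℕ → V) (f : ℕ → Finset V) :
    Prop where
  injOn_vertex : Set.InjOn u (Set.Iic n)
  injOn_edge : Set.InjOn f (Set.Iio n)
  edge_mem : ∀ i < n, f i ∈ H
  mem_edge : ∀ i < n, u i ∈ f i ∧ u (i + 1) ∈ f i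

namespace IsNatBergePath

variable {H : Finset (Finset V)} {n : ℕ} {u : ℕ → V} {f : ℕ → Finset V}

theorem hasBergePath (hp : IsNatBergePath H n u f) : HasBergePath H n := by
  refine ⟨fun i => u i, fun i => f i, fun i j hij => ?_, fun i j hij => ?_,
    fun i => hp.edge_mem i i.2, fun i => hp.mem_edge i i.2⟩
  · exact Fin.ext (hp.injOn_vertex (Nat.lt_succ_iff.1 i.2) (Nat.lt_succ_iff.1 j.2) hij)
  · exact Fin.ext (hp.injOn_edge i.2 j.2 hij)

theorem take (hp : IsNatBergePath H n u f) {m : ℕ} (hm : m ≤ n) : IsNatBergePath H m u f :=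
  ⟨hp.injOn_vertex.mono (Set.Iic_subset_Iic.2 hm), hp.injOn_edge.mono (Set.Iio_subset_Iio hm),
    fun i hi => hp.edge_mem i (by omega), fun i hi => hp.mem_edge i (by omega)⟩

theorem drop (hp : IsNatBergePath H n u f) {i : ℕ} (hi : i ≤ n) :
    IsNatBergePath H (n - i) (fun p => u (i + p)) (fun p => f (i + p)) where
  injOn_vertex p hp' q hq hpq := by
    simp only [Set.mem_Iic] at hp' hq
    have := hp.injOn_vertex (show i + p ≤ n by omega) (show i + q ≤ n by omega) hpq
    omega
  injOn_edge p hp' q hq hpq := by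
    simp only [Set.mem_Iio] at hp' hq
    have := hp.injOn_edge (show i + p < n by omega) (show i + q < n by omega) hpq
    omega
  edge_mem p hp' := hp.edge_mem (i + p) (by omega)
  mem_edge p hp' := by simpa only [Nat.add_assoc] using hp.mem_edge (i + p) (by omega)

theorem reroot (hp : IsNatBergePath H n u f) {w : V} (hw : w ∈ f 0)
    (hwu : ∀ i, 0 < i → i ≤ n → u i ≠ w) : IsNatBergePath H n (Function.update u 0 w) f where
  injOn_vertex i hi j hj hij := by
    simp only [Set.mem_Iic] at hi hj
    rcases Nat.eq_zero_or_pos i with rfl | hi0 <;> rcases Nat.eq_zero_or_pos j with rfl | hj0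
    · rfl
    · simp [hj0.ne', (hwu j hj0 hj).symm] at hij
    · simp [hi0.ne', hwu i hi0 hi] at hij
    · simpa [hi0.ne', hj0.ne'] using hp.injOn_vertex hi hj (by simpa [hi0.ne', hj0.ne'] using hij)
  injOn_edge := hp.injOn_edge
  edge_mem := hp.edge_mem
  mem_edge i hi := by
    rcases Nat.eq_zero_or_pos i with rfl | hi0
    · simpa [hw] using (hp.mem_edge 0 hi).2
    · simpa [hi0.ne'] using hp.mem_edge i hi

theorem snoc (hp : IsNatBergePath H n u f) {z : V} {g : Finset V} (hg : g ∈ H)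
    (hfg : ∀ i < n, f i ≠ g) (huz : ∀ i ≤ n, u i ≠ z) (hug : u n ∈ g) (hzg : z ∈ g) :
    IsNatBergePath H (n + 1) (Function.update u (n + 1) z) (Function.update f n g) where
  injOn_vertex i hi j hj hij := by
    simp only [Set.mem_Iic] at hi hj
    by_cases hin : i = n + 1 <;> by_cases hjn : j = n + 1
    · omega
    · simp [hin, hjn, (huz j (by omega)).symm] at hij
    · simp [hin, hjn, huz i (by omega)] at hij
    · simp only [Function.update_apply, hin, hjn, if_false] at hij
      exact hp.injOn_vertex (show i ≤ n by omega) (show j ≤ n by omega) hij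
  injOn_edge i hi j hj hij := by
    simp only [Set.mem_Iio] at hi hj
    by_cases hin : i = n <;> by_cases hjn : j = n
    · omega
    · exact absurd hij.symm (by simpa [hin, hjn] using hfg j (by omega))
    · simp [hin, hjn, hfg i (by omega)] at hij
    · simp only [Function.update_apply, hin, hjn, if_false] at hij
      exact hp.injOn_edge (show i < n by omega) (show j < n by omega) hij
  edge_mem i hi := by
    by_cases hin : i = n
    · simpa [hin] using hg
    · simpa [hin] using hp.edge_mem i (by omega)
  mem_edge i hi := by
    by_cases hin : i = n
    · subst hin; simp [hug, hzg]
    · simpa [hin, show i ≠ n + 1 by omega] using hp.mem_edge i (by omega)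

theorem append {s m : ℕ} {u' : ℕ → V} {f' : ℕ → Finset V} (hp : IsNatBergePath H s u f)
    (hq : IsNatBergePath H m u' f') (hjoin : u s = u' 0)
    (hvert : ∀ i ≤ s, ∀ j, 0 < j → j ≤ m → u i ≠ u' j) (hedge : ∀ i < s, ∀ j < m, f i ≠ f' j) :
    IsNatBergePath H (s + m) (fun i => if i ≤ s then u i else u' (i - s))
      (fun i => if i < s then f i else f' (i - s)) where
  injOn_vertex i hi j hj hij := by
    simp only [Set.mem_Iic] at hi hj
    dsimp only at hij
    split_ifs at hij with his hjs hjs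
    · exact hp.injOn_vertex his hjs hij
    · exact absurd hij (hvert i his (j - s) (by omega) (by omega))
    · exact absurd hij.symm (hvert j hjs (i - s) (by omega) (by omega))
    · have := hq.injOn_vertex (show i - s ≤ m by omega) (show j - s ≤ m by omega) hij
      omega
  injOn_edge i hi j hj hij := by
    simp only [Set.mem_Iio] at hi hj
    dsimp only at hij
    split_ifs at hij with his hjs hjs
    · exact hp.injOn_edge his hjs hij
    · exact absurd hij (hedge i his (j - s) (by omega))
    · exact absurd hij.symm (hedge j hjs (i - s) (by omega))
    · have := hq.injOn_edge (show i - s < m by omega) (show j - s < m by omega) hij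
      omega
  edge_mem i hi := by
    split_ifs with his
    · exact hp.edge_mem i his
    · exact hq.edge_mem (i - s) (by omega)
  mem_edge i hi := by
    by_cases his : i < s
    · simpa [his, his.le, show i + 1 ≤ s by omega] using hp.mem_edge i his
    · have := hq.mem_edge (i - s) (by omega)
      rw [if_neg his, if_neg (show ¬i + 1 ≤ s by omega), show i + 1 - s = i - s + 1 by omega]
      split_ifs with his'
      · obtain rfl : i = s := by omega
        simpa [hjoin] using this
      · exact this

end IsNatBergePath

theorem IsBergePath.exists_isNatBergePath {H : Finset (Finset V)} {s : ℕ} {pv : Fin (s + 1) → V}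
    {pe : Fin s → Finset V} (hp : IsBergePath H s pv pe) :
    ∃ u f, IsNatBergePath H s u f ∧ u 0 = pv 0 ∧ u s = pv (Fin.last s) := by
  obtain ⟨hpv, hpe, hpeH, hadj⟩ := hp
  refine ⟨fun i => pv ⟨min i s, by omega⟩, fun i => if h : i < s then pe ⟨i, h⟩ else ∅,
    ⟨fun i hi j hj hij => ?_, fun i hi j hj hij => ?_, fun i hi => ?_, fun i hi => ?_⟩,
    by simp, by simp [Fin.last]⟩
  · simp only [Set.mem_Iic] at hi hj
    simpa [hi, hj] using congrArg Fin.val (hpv hij)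
  · simp only [Set.mem_Iio] at hi hj
    simpa [hi, hj] using congrArg Fin.val (hpe (by simpa [hi, hj] using hij))
  · simpa [hi] using hpeH ⟨i, hi⟩
  · have hvi : (⟨min i s, by omega⟩ : Fin (s + 1)) = Fin.castSucc ⟨i, hi⟩ := by
      ext; simp only [Fin.castSucc_mk, inf_eq_left]; omega
    have hvi' : (⟨min (i + 1) s, by omega⟩ : Fin (s + 1)) = Fin.succ ⟨i, hi⟩ := by
      ext; simp only [Fin.succ_mk, inf_eq_left, Order.add_one_le_iff]; omega
    simpa [hi, hvi, hvi'] using hadj ⟨i, hi⟩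

section Cycle

variable {t : ℕ}

def cycleShift (k : Fin t) (i : ℕ) : Fin t := ⟨(k + 1 + i) % t, Nat.mod_lt _ k.pos⟩

theorem cnext_cycleShift (k : Fin t) (i : ℕ) : cnext (cycleShift k i) = cycleShift k (i + 1) := by
  ext
  simp only [cnext, cycleShift, Nat.mod_add_mod, Nat.add_assoc]

theorem cycleShift_injOn (k : Fin t) : Set.InjOn (cycleShift k) (Set.Iio t) := by
  intro i hi j hj hij
  have : i % t = j % t := Nat.ModEq.add_left_cancel' (k + 1) (congrArg Fin.val hij)
  rwa [Nat.mod_eq_of_lt hi, Nat.mod_eq_of_lt hj] at this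

theorem cycleShift_pred (k : Fin t) : cycleShift k (t - 1) = k := by
  ext
  have := k.pos
  simp only [cycleShift, show (k : ℕ) + 1 + (t - 1) = k + t by omega, Nat.add_mod_right,
    Nat.mod_eq_of_lt k.2]

variable {H : Finset (Finset V)} {v : Fin t → V} {e : Fin t → Finset V}

theorem IsBergeCycle.isNatBergePath_cycleShift (hC : IsBergeCycle H t v e) (k : Fin t) :
    IsNatBergePath H (t - 1) (v ∘ cycleShift k) (e ∘ cycleShift k) where
  injOn_vertex := hC.1.comp_injOn ((cycleShift_injOn k).mono fun i hi => by
    simp only [Set.mem_Iic, Set.mem_Iio] at hi ⊢; have := k.pos; omega)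
  injOn_edge := hC.2.1.comp_injOn ((cycleShift_injOn k).mono fun i hi => by
    simp only [Set.mem_Iio] at hi ⊢; omega)
  edge_mem i _ := hC.2.2.1 _
  mem_edge i _ := by simpa [cnext_cycleShift] using hC.2.2.2 (cycleShift k i)

/-- A Berge path leaving the cycle at `v k`. It may use `e k`, the edge at which the cycle is
opened before the path is attached. -/
structure IsPendantPath (H : Finset (Finset V)) (v : Fin t → V) (e : Fin t → Finset V) (k : Fin t)
    (m : ℕ) (u : ℕ → V) (f : ℕ → Finset V) : Prop where
  isNatBergePath : IsNatBergePath H m u f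
  start : u 0 = v k
  not_mem_range : ∀ i, 0 < i → i ≤ m → u i ∉ Set.range v
  eq_of_edge_eq : ∀ i < m, ∀ j, f i = e j → j = k

/-- Going once around the cycle from `v (k + 1)` to `v k` and then along the pendant path. -/
theorem IsBergeCycle.hasBergePath_of_isPendantPath (hC : IsBergeCycle H t v e) {k : Fin t}
    {m : ℕ} {u : ℕ → V} {f : ℕ → Finset V} (hP : IsPendantPath H v e k m u f) :
    HasBergePath H (t - 1 + m) := by
  refine IsNatBergePath.hasBergePath <|
    (IsBergeCycle.isNatBergePath_cycleShift hC k).append hP.isNatBergePath ?_ ?_ ?_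
  · simp [cycleShift_pred, hP.start]
  · exact fun i _ j hj0 hjm hij => hP.not_mem_range j hj0 hjm ⟨_, hij⟩
  · intro i hi j hj hij
    have hk : cycleShift k i = cycleShift k (t - 1) := by
      rw [cycleShift_pred]; exact hP.eq_of_edge_eq j hj _ hij.symm
    have := cycleShift_injOn k (show i < t by omega) (show t - 1 < t by have := k.pos; omega) hk
    omega

namespace IsPendantPath

variable {k : Fin t} {m : ℕ} {u : ℕ → V} {f : ℕ → Finset V}

theorem nil (k : Fin t) (f : ℕ → Finset V) : IsPendantPath H v e k 0 (fun _ => v k) f where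
  isNatBergePath :=
    ⟨fun i hi j hj _ => by simp_all, fun i hi => by simp at hi, fun i hi => by omega,
      fun i hi => by omega⟩
  start := rfl
  not_mem_range i hi0 hi := by omega
  eq_of_edge_eq i hi := by omega

theorem take (hP : IsPendantPath H v e k m u f) {m' : ℕ} (hm : m' ≤ m) :
    IsPendantPath H v e k m' u f :=
  ⟨hP.isNatBergePath.take hm, hP.start, fun i hi0 hi => hP.not_mem_range i hi0 (hi.trans hm),
    fun i hi => hP.eq_of_edge_eq i (by omega)⟩

theorem snoc (hP : IsPendantPath H v e k m u f) {z : V} {g : Finset V} (hg : g ∈ H)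
    (hge : ∀ j, g = e j → j = k) (hfg : ∀ i < m, f i ≠ g) (huz : ∀ i ≤ m, u i ≠ z)
    (hz : z ∉ Set.range v) (hug : u m ∈ g) (hzg : z ∈ g) :
    IsPendantPath H v e k (m + 1) (Function.update u (m + 1) z) (Function.update f m g) where
  isNatBergePath := hP.isNatBergePath.snoc hg hfg huz hug hzg
  start := by simpa using hP.start
  not_mem_range i hi0 hi := by
    by_cases him : i = m + 1
    · simpa [him] using hz
    · simpa [him] using hP.not_mem_range i hi0 (by omega)
  eq_of_edge_eq i hi j := by
    by_cases him : i = m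
    · simpa [him] using hge j
    · simpa [him] using hP.eq_of_edge_eq i (by omega) j

theorem exists_two {a b : V} {g₀ g₁ : Finset V} (hg₀ : g₀ ∈ H) (hg₁ : g₁ ∈ H) (hg : g₀ ≠ g₁)
    (hg₀e : ∀ j, g₀ = e j → j = k) (hg₁e : ∀ j, g₁ = e j → j = k) (hab : a ≠ b)
    (ha : a ∉ Set.range v) (hb : b ∉ Set.range v) (hkg₀ : v k ∈ g₀) (hag₀ : a ∈ g₀)
    (hag₁ : a ∈ g₁) (hbg₁ : b ∈ g₁) : ∃ u f, IsPendantPath H v e k 2 u f := by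
  have hP₁ := (nil k (fun _ => ∅)).snoc hg₀ hg₀e (fun i hi => by omega)
    (fun i _ hka => ha ⟨k, hka⟩) ha hkg₀ hag₀
  refine ⟨_, _, hP₁.snoc hg₁ hg₁e (fun i hi => ?_) (fun i hi => ?_) hb (by simpa using hag₁) hbg₁⟩
  · simpa [show i = 0 by omega] using hg
  · rcases Nat.le_one_iff_eq_zero_or_eq_one.1 hi with rfl | rfl
    · simpa using fun hkb => hb ⟨k, hkb⟩
    · simpa using hab

end IsPendantPath

theorem IsBergeCycle.exists_isPendantPath_two_of_mem (hC : IsBergeCycle H t v e)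
    {h g : Finset V} (hh : h ∈ H) (hhe : ∀ j, h ≠ e j) (hg : g ∈ H) (hgh : g ≠ h)
    (hg2 : 1 < g.card) {x y : V} (hxh : x ∈ h) (hyh : y ∈ h) (hxg : x ∈ g) (hxy : x ≠ y)
    (hx : x ∉ Set.range v) (hy : y ∉ Set.range v) {j : Fin t} (hj : v j ∈ h) :
    ∃ k u f, IsPendantPath H v e k 2 u f := by
  have hhe' : ∀ k j, h = e j → j = k := fun _ j hhj => absurd hhj (hhe j)
  by_cases hge : ∃ i, g = e i
  · obtain ⟨i, rfl⟩ := hge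
    exact ⟨i, IsPendantPath.exists_two hg hh hgh (fun j hij => hC.2.1 hij.symm) (hhe' i) hxy
      hx hy (hC.2.2.2 i).1 hxg hxh hyh⟩
  have hge' : ∀ k j, g = e j → j = k := fun _ j hgj => absurd ⟨j, hgj⟩ hge
  obtain ⟨z, hzg, hzx⟩ := Finset.exists_mem_ne hg2 x
  by_cases hz : ∃ k, v k = z
  · obtain ⟨k, rfl⟩ := hz
    exact ⟨k, IsPendantPath.exists_two hg hh hgh (hge' k) (hhe' k) hxy hx hy hzg hxg hxh hyh⟩
  · exact ⟨j, IsPendantPath.exists_two hh hg hgh.symm (hhe' j) (hge' j) hzx.symm hx hz hj hxh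
      hxg hzg⟩

/-- Take a shortest Berge path from the cycle to `h`: passing through a cycle vertex, a cycle edge
or a vertex of `h` on the way would give a shorter one. If its first edge is a cycle edge `e b`,
restart it at `v b`. -/
theorem IsBergeCycle.exists_isPendantPath_to (hC : IsBergeCycle H t v e)
    (hconn : BergeConnected H) (k₀ : Fin t) {h : Finset V} (hdisj : ∀ j, v j ∉ h) {x : V}
    (hxh : x ∈ h) : ∃ k n u f, IsPendantPath H v e k n u f ∧ u n ∈ h ∧ ∀ i < n, u i ∉ h := by
  classical
  have hex : ∃ n a u f, IsNatBergePath H n u f ∧ u 0 = v a ∧ u n ∈ h := by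
    obtain ⟨s, pv, pe, hp, hp0, hps⟩ := hconn (v k₀) x fun hx => hdisj k₀ (hx ▸ hxh)
    obtain ⟨u, f, hu, hu0, hus⟩ := IsBergePath.exists_isNatBergePath hp
    exact ⟨s, k₀, u, f, hu, hu0.trans hp0, by rwa [hus, hps]⟩
  obtain ⟨a, u, f, hp, hu0, hun⟩ := Nat.find_spec hex
  set n := Nat.find hex
  have hmin : ∀ m < n, ∀ a u f, IsNatBergePath H m u f → u 0 = v a → u m ∉ h :=
    fun m hm a u f hp hu0 hum => Nat.find_min hex hm ⟨a, u, f, hp, hu0, hum⟩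
  have hn0 : 0 < n := Nat.pos_of_ne_zero fun hn => hdisj a (hu0 ▸ hn ▸ hun)
  have hoff_h : ∀ i < n, u i ∉ h := fun i hi => hmin i hi a u f (hp.take hi.le) hu0
  have hoff_v : ∀ i, 0 < i → i ≤ n → u i ∉ Set.range v := by
    rintro i hi0 hin ⟨b, hb⟩
    exact hmin (n - i) (by omega) b _ _ (hp.drop hin) (by simpa using hb.symm)
      (by simpa [Nat.add_sub_cancel' hin] using hun)
  have hoff_e : ∀ i, 0 < i → i < n → f i ∉ Set.range e := by
    rintro i hi0 hin ⟨b, hb⟩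
    refine hmin (n - i) (by omega) b _ _ ((hp.drop hin.le).reroot (w := v b) ?_ ?_) (by simp) ?_
    · simpa [hb] using (hC.2.2.2 b).1
    · exact fun p hp0 hpn hpb => hoff_v (i + p) (by omega) (by omega) ⟨b, hpb.symm⟩
    · simpa [show n - i ≠ 0 by omega, Nat.add_sub_cancel' hin.le] using hun
  by_cases hf0 : ∃ b, f 0 = e b
  · obtain ⟨b, hb⟩ := hf0
    refine ⟨b, n, Function.update u 0 (v b), f, ⟨hp.reroot ?_ ?_, by simp, ?_, ?_⟩, ?_, ?_⟩
    · simpa [hb] using (hC.2.2.2 b).1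
    · exact fun i hi0 hin hib => hoff_v i hi0 hin ⟨b, hib.symm⟩
    · intro i hi0 hin
      simpa [hi0.ne'] using hoff_v i hi0 hin
    · intro i hin j hij
      rcases Nat.eq_zero_or_pos i with rfl | hi0
      · exact hC.2.1 (hij.symm.trans hb)
      · exact absurd ⟨j, hij.symm⟩ (hoff_e i hi0 hin)
    · simpa [hn0.ne'] using hun
    · intro i hin
      rcases Nat.eq_zero_or_pos i with rfl | hi0
      · simpa using hdisj b
      · simpa [hi0.ne'] using hoff_h i hin
  · refine ⟨a, n, u, f, ⟨hp, hu0, hoff_v, fun i hin j hij => ?_⟩, hun, hoff_h⟩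
    rcases Nat.eq_zero_or_pos i with rfl | hi0
    · exact absurd ⟨j, hij⟩ hf0
    · exact absurd ⟨j, hij.symm⟩ (hoff_e i hi0 hin)

theorem IsBergeCycle.exists_isPendantPath_two_of_disjoint (hC : IsBergeCycle H t v e)
    (hconn : BergeConnected H) (k₀ : Fin t) {h : Finset V} (hh : h ∈ H) (hhe : ∀ j, h ≠ e j)
    (hdisj : ∀ j, v j ∉ h) {x y : V} (hxh : x ∈ h) (hyh : y ∈ h) (hxy : x ≠ y)
    (hx : x ∉ Set.range v) (hy : y ∉ Set.range v) : ∃ k u f, IsPendantPath H v e k 2 u f := by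
  obtain ⟨k, n, u, f, hP, hun, hoff⟩ := IsBergeCycle.exists_isPendantPath_to hC hconn k₀ hdisj hxh
  obtain ⟨z, hzh, hz, hzu⟩ : ∃ z ∈ h, z ∉ Set.range v ∧ z ≠ u n := by
    by_cases hux : u n = x
    · exact ⟨y, hyh, hy, fun hyu => hxy (hux ▸ hyu.symm)⟩
    · exact ⟨x, hxh, hx, Ne.symm hux⟩
  have hn0 : n ≠ 0 := by rintro rfl; exact hdisj k (hP.start ▸ hun)
  have hP' := hP.snoc hh (fun j hj => absurd hj (hhe j))
    (fun i hi hfi => hoff i hi (hfi ▸ (hP.isNatBergePath.mem_edge i hi).1))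
    (fun i hi hiz => (Nat.lt_or_eq_of_le hi).elim (fun hi => hoff i hi (hiz ▸ hzh))
      fun hi => hzu (hi ▸ hiz).symm) hz hun hzh
  exact ⟨k, _, _, hP'.take (by omega)⟩

end Cycle

end

theorem hyperedge_at_most_one_outside_general {V : Type*} [DecidableEq V]
    (H : Finset (Finset V)) (r ℓ : ℕ) (hℓ : 2 ≤ ℓ)
    (hunif : ∀ h ∈ H, h.card = r)
    (hconn : BergeConnected H)
    (hdeg : ∀ x : V, 2 ≤ (H.filter (fun h => x ∈ h)).card)
    (hpathmax : ∀ m, HasBergePath H m → m ≤ ℓ - 1)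
    (v : Fin (ℓ - 1) → V) (e : Fin (ℓ - 1) → Finset V)
    (hC : IsBergeCycle H (ℓ - 1) v e)
    (h : Finset V) (hh : h ∈ H) (hnd : ∀ i, h ≠ e i) :
    (h.filter (fun x => x ∉ Finset.univ.image v)).card ≤ 1 := by
  by_contra hcon
  obtain ⟨x, hx, y, hy, hxy⟩ := Finset.one_lt_card.1 (not_le.1 hcon)
  simp only [Finset.mem_filter, Finset.mem_image, Finset.mem_univ, true_and] at hx hy
  obtain ⟨k, u, f, hP⟩ : ∃ k u f, IsPendantPath H v e k 2 u f := by
    by_cases hhv : ∃ j, v j ∈ h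
    · obtain ⟨j, hj⟩ := hhv
      obtain ⟨g, hg, hgh⟩ := Finset.exists_mem_ne (hdeg x) h
      rw [Finset.mem_filter] at hg
      have hg2 : 1 < g.card := by
        rw [hunif g hg.1, ← hunif h hh]
        exact Finset.one_lt_card.2 ⟨x, hx.1, y, hy.1, hxy⟩
      exact IsBergeCycle.exists_isPendantPath_two_of_mem hC hh hnd hg.1 hgh hg2 hx.1 hy.1 hg.2 hxy
        hx.2 hy.2 hj
    · exact IsBergeCycle.exists_isPendantPath_two_of_disjoint hC hconn ⟨0, by omega⟩ hh hnd
        (not_exists.1 hhv) hx.1 hy.1 hxy hx.2 hy.2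
  have := hpathmax _ (IsBergeCycle.hasBergePath_of_isPendantPath hC hP)
  omega

/-- If `H` is a connected `r`-uniform hypergraph with minimum degree at least 2 whose
longest Berge-path and longest Berge-cycle both have length `ℓ-1`, and `C` is a
Berge-cycle of length `ℓ-1` with defining vertex set `V`, then every hyperedge of `H`
that is not a defining hyperedge of `C` contains at most one vertex outside `V`. -/
theorem hyperedge_at_most_one_outside {V : Type*} [Fintype V] [DecidableEq V]
    (H : Finset (Finset V)) (r ℓ : ℕ) (hℓ : 2 ≤ ℓ)
    (hunif : ∀ h ∈ H, h.card = r)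
    (hconn : BergeConnected H)
    (hdeg : ∀ x : V, 2 ≤ (H.filter (fun h => x ∈ h)).card)
    (hpath : HasBergePath H (ℓ - 1)) (hpathmax : ∀ m, HasBergePath H m → m ≤ ℓ - 1)
    (hcycmax : ∀ m, HasBergeCycle H m → m ≤ ℓ - 1)
    (v : Fin (ℓ - 1) → V) (e : Fin (ℓ - 1) → Finset V)
    (hC : IsBergeCycle H (ℓ - 1) v e)
    (h : Finset V) (hh : h ∈ H) (hnd : ∀ i, h ≠ e i) :
    (h.filter (fun x => x ∉ Finset.univ.image v)).card ≤ 1 :=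
  hyperedge_at_most_one_outside_general H r ℓ hℓ hunif hconn hdeg hpathmax v e hC h hh hnd
end

section
/- Let H be a connected r-uniform hypergraph whose longest Berge-path and longest Berge-cycle both have length ℓ-1, and let C be a Berge-cycle of length ℓ-1 with defining vertices v_1,...,v_{ℓ-1} and defining hyperedges e_1,...,e_{ℓ-1} where v_i, v_{i+1} ∈ e_i (mod ℓ-1). If u, v are (not necessarily distinct) vertices outside the defining vertex set of C, then there cannot exist distinct hyperedges h_1, h_2 of H not among the defining hyperedges of C and an index i with v, v_i ∈ h_1 and u, v_{i+1} ∈ h_2. -/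
theorem cnext_eq_add_one {s : ℕ} (k : Fin (s + 1)) : cnext k = k + 1 := by
  ext
  simp [cnext, Fin.val_add]

theorem cnext_castSucc {s : ℕ} (k : Fin s) : cnext k.castSucc = k.succ := by
  ext
  simp [cnext]

theorem cnext_last (s : ℕ) : cnext (Fin.last s) = 0 := by
  ext
  simp [cnext]

section BergeSurgery

variable {V : Type*} {H : Finset (Finset V)}

namespace IsBergePath

variable {s : ℕ} {v : Fin (s + 1) → V} {e : Fin s → Finset V} {x : V} {h : Finset V}

theorem cons (hP : IsBergePath H s v e) (hx : x ∉ Set.range v) (hH : h ∈ H)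
    (he : h ∉ Set.range e) (hxh : x ∈ h) (hvh : v 0 ∈ h) :
    IsBergePath H (s + 1) (Fin.cons x v) (Fin.cons h e) := by
  obtain ⟨hv, he', heH, hmem⟩ := hP
  refine ⟨Fin.cons_injective_of_injective hx hv, Fin.cons_injective_of_injective he he', ?_, ?_⟩
  · exact Fin.cases hH heH
  · refine Fin.cases ⟨hxh, hvh⟩ fun k => ?_
    simpa [← Fin.succ_castSucc] using hmem k

theorem snoc (hP : IsBergePath H s v e) (hx : x ∉ Set.range v) (hH : h ∈ H)
    (he : h ∉ Set.range e) (hvh : v (Fin.last s) ∈ h) (hxh : x ∈ h) :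
    IsBergePath H (s + 1) (Fin.snoc v x) (Fin.snoc e h) := by
  obtain ⟨hv, he', heH, hmem⟩ := hP
  refine ⟨Fin.snoc_injective_of_injective hv hx, Fin.snoc_injective_of_injective he' he, ?_, ?_⟩
  · exact Fin.lastCases (by simpa using hH) (by simpa using heH)
  · refine Fin.lastCases ⟨by simpa using hvh, by simpa using hxh⟩ fun k => ?_
    rw [Fin.snoc_castSucc, Fin.snoc_castSucc, Fin.succ_castSucc, Fin.snoc_castSucc]
    exact hmem k

theorem close (hP : IsBergePath H s v e) (hH : h ∈ H) (he : h ∉ Set.range e)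
    (hlast : v (Fin.last s) ∈ h) (hzero : v 0 ∈ h) :
    IsBergeCycle H (s + 1) v (Fin.snoc e h) := by
  obtain ⟨hv, he', heH, hmem⟩ := hP
  refine ⟨hv, Fin.snoc_injective_of_injective he' he, ?_, ?_⟩
  · exact Fin.lastCases (by simpa using hH) (by simpa using heH)
  · refine Fin.lastCases ⟨by simpa using hlast, by simpa [cnext_last] using hzero⟩ fun k => ?_
    simpa [cnext_castSucc] using hmem k

end IsBergePath

namespace IsBergeCycle

theorem toBergePath {s : ℕ} {v : Fin (s + 1) → V} {e : Fin (s + 1) → Finset V}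
    (hC : IsBergeCycle H (s + 1) v e) : IsBergePath H s v (fun k => e k.castSucc) := by
  obtain ⟨hv, he, heH, hmem⟩ := hC
  refine ⟨hv, he.comp (Fin.castSucc_injective s), fun k => heH _, fun k => ?_⟩
  simpa [cnext_castSucc] using hmem k.castSucc

theorem exists_rotate {t : ℕ} {v : Fin t → V} {e : Fin t → Finset V}
    (hC : IsBergeCycle H t v e) (i : Fin t) :
    ∃ (s : ℕ) (v' : Fin (s + 1) → V) (e' : Fin (s + 1) → Finset V),
      IsBergeCycle H (s + 1) v' e' ∧ t = s + 1 ∧ Set.range v' ⊆ Set.range v ∧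
      Set.range e' ⊆ Set.range e ∧ v' (Fin.last s) = v i ∧ v' 0 = v (cnext i) := by
  obtain _ | s := t
  · exact i.elim0
  obtain ⟨hv, he, heH, hmem⟩ := hC
  have hrot : Function.Injective (· + (i + 1)) := add_left_injective _
  refine ⟨s, fun k => v (k + (i + 1)), fun k => e (k + (i + 1)),
    ⟨hv.comp hrot, he.comp hrot, fun k => heH _, fun k => ?_⟩, rfl,
    Set.range_comp_subset_range _ _, Set.range_comp_subset_range _ _, ?_, ?_⟩
  · simpa [cnext_eq_add_one, add_right_comm] using hmem (k + (i + 1))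
  · exact congrArg v (by rw [add_left_comm, Fin.last_add_one, add_zero])
  · exact congrArg v (by rw [zero_add, cnext_eq_add_one])

end IsBergeCycle

end BergeSurgery

theorem no_consecutive_outside_edges_general {V : Type*}
    (H : Finset (Finset V)) (ℓ : ℕ)
    (hpathmax : ∀ m, HasBergePath H m → m ≤ ℓ - 1)
    (hcycmax : ∀ m, HasBergeCycle H m → m ≤ ℓ - 1)
    (v : Fin (ℓ - 1) → V) (e : Fin (ℓ - 1) → Finset V)
    (hC : IsBergeCycle H (ℓ - 1) v e)
    (u w : V) (hu : u ∉ Set.range v) (hw : w ∉ Set.range v) :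
    ¬ ∃ (h₁ h₂ : Finset V) (i : Fin (ℓ - 1)),
        h₁ ∈ H ∧ h₂ ∈ H ∧ h₁ ≠ h₂ ∧ (∀ j, h₁ ≠ e j) ∧ (∀ j, h₂ ≠ e j) ∧
        w ∈ h₁ ∧ v i ∈ h₁ ∧ u ∈ h₂ ∧ v (cnext i) ∈ h₂ := by
  rintro ⟨h₁, h₂, i, hh₁, hh₂, hne, hne₁, hne₂, hw₁, hvi₁, hu₂, hvi₂⟩
  obtain ⟨s, v', e', hC', hs, hv', he', hlast, hzero⟩ := hC.exists_rotate i
  rw [hs] at hpathmax hcycmax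
  have he₁ : h₁ ∉ Set.range e := by simpa [eq_comm] using hne₁
  have he₂ : h₂ ∉ Set.range e := by simpa [eq_comm] using hne₂
  have hP := hC'.toBergePath.snoc (fun hw' => hw (hv' hw')) hh₁
    (fun hh => he₁ (he' (Set.range_comp_subset_range _ _ hh))) (hlast ▸ hvi₁) hw₁
  have he₂' : h₂ ∉ Set.range (Fin.snoc (fun k => e' k.castSucc) h₁ : Fin (s + 1) → _) := by
    rw [Fin.range_snoc]
    rintro (rfl | hh)
    exacts [hne rfl, he₂ (he' (Set.range_comp_subset_range _ _ hh))]
  by_cases huw : u = w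
  · subst huw
    have := hcycmax _
      ⟨_, _, hP.close hh₂ he₂' (by simpa using hu₂) (by simpa [hzero] using hvi₂)⟩
    omega
  · have hu' : u ∉ Set.range (Fin.snoc v' w : Fin (s + 2) → V) := by
      simpa [huw] using fun hu' => hu (hv' hu')
    have := hpathmax _ ⟨_, _, hP.cons hu' hh₂ he₂' hu₂ (by simpa [hzero] using hvi₂)⟩
    omega

/-- Lemma 8 (ii): if `u, v` are (not necessarily distinct) vertices outside the
defining vertex set of a longest Berge-cycle `C`, then there cannot exist distinct
non-defining hyperedges `h₁, h₂` and an index `i` with `v, vᵢ ∈ h₁` and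
`u, v_{i+1} ∈ h₂`. -/
theorem no_consecutive_outside_edges {V : Type*} [Fintype V] [DecidableEq V]
    (H : Finset (Finset V)) (r ℓ : ℕ) (hℓ : 2 ≤ ℓ)
    (hunif : ∀ h ∈ H, h.card = r)
    (hconn : BergeConnected H)
    (hpath : HasBergePath H (ℓ - 1)) (hpathmax : ∀ m, HasBergePath H m → m ≤ ℓ - 1)
    (hcycmax : ∀ m, HasBergeCycle H m → m ≤ ℓ - 1)
    (v : Fin (ℓ - 1) → V) (e : Fin (ℓ - 1) → Finset V)
    (hC : IsBergeCycle H (ℓ - 1) v e)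
    (u w : V) (hu : u ∉ Set.range v) (hw : w ∉ Set.range v) :
    ¬ ∃ (h₁ h₂ : Finset V) (i : Fin (ℓ - 1)),
        h₁ ∈ H ∧ h₂ ∈ H ∧ h₁ ≠ h₂ ∧ (∀ j, h₁ ≠ e j) ∧ (∀ j, h₂ ≠ e j) ∧
        w ∈ h₁ ∧ v i ∈ h₁ ∧ u ∈ h₂ ∧ v (cnext i) ∈ h₂ :=
  no_consecutive_outside_edges_general H ℓ hpathmax hcycmax v e hC u w hu hw
end

section
/- Let H be a connected r-uniform hypergraph whose longest Berge-path and longest Berge-cycle both have length ℓ-1, and let C be a Berge-cycle of length ℓ-1 with defining vertices v_1,...,v_{ℓ-1} and defining hyperedges e_1,...,e_{ℓ-1} with v_i, v_{i+1} ∈ e_i (mod ℓ-1). If there exists a vertex v outside the defining vertices of C and distinct hyperedges h_1, h_2 of H not among the defining hyperedges of C with v, v_{i-1} ∈ h_1 and v, v_{i+1} ∈ h_2, then H contains a Berge-cycle of length ℓ-1 that does not have v_i among its defining vertices. -/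
open Function

theorem Function.Injective.update_of_forall_ne {α β : Type*} [DecidableEq α] {f : α → β}
    (hf : Injective f) {i : α} {b : β} (hb : ∀ j ≠ i, f j ≠ b) : Injective (update f i b) := by
  intro x y hxy
  by_cases hx : x = i <;> by_cases hy : y = i
  · exact hx.trans hy.symm
  · subst hx
    rw [update_self, update_of_ne hy] at hxy
    exact absurd hxy.symm (hb y hy)
  · subst hy
    rw [update_self, update_of_ne hx] at hxy
    exact absurd hxy (hb x hx)
  · rw [update_of_ne hx, update_of_ne hy] at hxy
    exact hf hxy

theorem cnext_cprev {t : ℕ} (i : Fin t) : cnext (cprev i) = i := by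
  have := i.pos
  apply Fin.ext
  simp only [cnext, cprev]
  rcases Nat.eq_zero_or_pos i.1 with h | h
  · rw [h, Nat.zero_add, Nat.mod_eq_of_lt (Nat.sub_lt this one_pos),
      Nat.sub_add_cancel (show 1 ≤ t from this), Nat.mod_self]
  · rw [show i.1 + t - 1 = i.1 - 1 + t by omega, Nat.add_mod_right,
      Nat.mod_eq_of_lt (show i.1 - 1 < t by omega), Nat.sub_add_cancel h, Nat.mod_eq_of_lt i.2]

theorem cprev_cnext {t : ℕ} (i : Fin t) : cprev (cnext i) = i := by
  apply Fin.ext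
  simp only [cnext, cprev]
  rcases Nat.lt_or_ge (i.1 + 1) t with h | h
  · rw [Nat.mod_eq_of_lt h, show i.1 + 1 + t - 1 = i.1 + t by omega, Nat.add_mod_right,
      Nat.mod_eq_of_lt i.2]
  · rw [show i.1 + 1 = t by omega, Nat.mod_self, show 0 + t - 1 = i.1 by omega,
      Nat.mod_eq_of_lt i.2]

theorem cnext_eq_iff {t : ℕ} {i j : Fin t} : cnext j = i ↔ j = cprev i :=
  ⟨fun h => by rw [← h, cprev_cnext], fun h => by rw [h, cnext_cprev]⟩

theorem IsBergeCycle.replace_vertex {V : Type*} {H : Finset (Finset V)} {t : ℕ}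
    {v : Fin t → V} {e : Fin t → Finset V} (hC : IsBergeCycle H t v e)
    {u : V} (hu : u ∉ Set.range v) {h₁ h₂ : Finset V} {i : Fin t}
    (hh₁ : h₁ ∈ H) (hh₂ : h₂ ∈ H) (hne : h₁ ≠ h₂)
    (hnd₁ : ∀ j, h₁ ≠ e j) (hnd₂ : ∀ j, h₂ ≠ e j)
    (hm₁ : u ∈ h₁) (hv₁ : v (cprev i) ∈ h₁) (hm₂ : u ∈ h₂) (hv₂ : v (cnext i) ∈ h₂) :
    IsBergeCycle H t (update v i u) (update (update e i h₂) (cprev i) h₁) := by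
  obtain ⟨hvinj, heinj, heH, hinc⟩ := hC
  refine ⟨hvinj.update_of_forall_ne fun j _ h => hu ⟨j, h⟩, ?_, fun j => ?_, fun j => ?_⟩
  · refine (heinj.update_of_forall_ne fun j _ h => hnd₂ j h.symm).update_of_forall_ne fun j _ => ?_
    rcases eq_or_ne j i with rfl | hj
    · simpa only [update_self] using hne.symm
    · simpa only [update_of_ne hj] using (hnd₁ j).symm
  · rcases eq_or_ne j (cprev i) with rfl | hj
    · simpa only [update_self] using hh₁
    rcases eq_or_ne j i with rfl | hji
    · simpa only [update_of_ne hj, update_self] using hh₂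
    · simpa only [update_of_ne hj, update_of_ne hji] using heH j
  · rcases eq_or_ne j (cprev i) with rfl | hj
    · rw [cnext_cprev, update_self, update_self]
      -- `cprev i = i` happens exactly for cycles of length one
      rcases eq_or_ne (cprev i) i with h | h
      · rw [h, update_self]
        exact ⟨hm₁, hm₁⟩
      · rw [update_of_ne h]
        exact ⟨hv₁, hm₁⟩
    have hnext : cnext j ≠ i := fun h => hj (cnext_eq_iff.1 h)
    rcases eq_or_ne j i with rfl | hji
    · simpa only [update_of_ne hj, update_self, update_of_ne hnext] using ⟨hm₂, hv₂⟩
    · simpa only [update_of_ne hj, update_of_ne hji, update_of_ne hnext] using hinc j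

theorem replace_cycle_vertex_general {V : Type*}
    (H : Finset (Finset V)) (ℓ : ℕ)
    (v : Fin (ℓ - 1) → V) (e : Fin (ℓ - 1) → Finset V)
    (hC : IsBergeCycle H (ℓ - 1) v e)
    (u : V) (hu : u ∉ Set.range v)
    (h₁ h₂ : Finset V) (i : Fin (ℓ - 1))
    (hh₁ : h₁ ∈ H) (hh₂ : h₂ ∈ H) (hne : h₁ ≠ h₂)
    (hnd₁ : ∀ j, h₁ ≠ e j) (hnd₂ : ∀ j, h₂ ≠ e j)
    (hm₁ : u ∈ h₁) (hv₁ : v (cprev i) ∈ h₁)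
    (hm₂ : u ∈ h₂) (hv₂ : v (cnext i) ∈ h₂) :
    ∃ (v' : Fin (ℓ - 1) → V) (e' : Fin (ℓ - 1) → Finset V),
      IsBergeCycle H (ℓ - 1) v' e' ∧ ∀ j, v' j ≠ v i := by
  refine ⟨_, _, hC.replace_vertex hu hh₁ hh₂ hne hnd₁ hnd₂ hm₁ hv₁ hm₂ hv₂, fun j => ?_⟩
  rcases eq_or_ne j i with rfl | hj
  · simpa only [update_self] using fun h => hu ⟨j, h.symm⟩
  · simpa only [update_of_ne hj] using hC.1.ne hj

/-- Lemma 8 (iii): if a vertex `v` outside the defining vertices of a longest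
Berge-cycle `C` lies in distinct non-defining hyperedges `h₁, h₂` with
`v_{i-1} ∈ h₁` and `v_{i+1} ∈ h₂`, then `H` contains a Berge-cycle of length `ℓ-1`
not containing `vᵢ` as a defining vertex. -/
theorem replace_cycle_vertex {V : Type*} [Fintype V] [DecidableEq V]
    (H : Finset (Finset V)) (r ℓ : ℕ) (hℓ : 2 ≤ ℓ)
    (hunif : ∀ h ∈ H, h.card = r)
    (hconn : BergeConnected H)
    (hpath : HasBergePath H (ℓ - 1)) (hpathmax : ∀ m, HasBergePath H m → m ≤ ℓ - 1)
    (hcycmax : ∀ m, HasBergeCycle H m → m ≤ ℓ - 1)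
    (v : Fin (ℓ - 1) → V) (e : Fin (ℓ - 1) → Finset V)
    (hC : IsBergeCycle H (ℓ - 1) v e)
    (u : V) (hu : u ∉ Set.range v)
    (h₁ h₂ : Finset V) (i : Fin (ℓ - 1))
    (hh₁ : h₁ ∈ H) (hh₂ : h₂ ∈ H) (hne : h₁ ≠ h₂)
    (hnd₁ : ∀ j, h₁ ≠ e j) (hnd₂ : ∀ j, h₂ ≠ e j)
    (hm₁ : u ∈ h₁) (hv₁ : v (cprev i) ∈ h₁)
    (hm₂ : u ∈ h₂) (hv₂ : v (cnext i) ∈ h₂) :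
    ∃ (v' : Fin (ℓ - 1) → V) (e' : Fin (ℓ - 1) → Finset V),
      IsBergeCycle H (ℓ - 1) v' e' ∧ ∀ j, v' j ≠ v i :=
  replace_cycle_vertex_general H ℓ v e hC u hu h₁ h₂ i hh₁ hh₂ hne hnd₁ hnd₂ hm₁ hv₁ hm₂ hv₂
end

section
/- Let P be a Berge-path of length ℓ-1 in a 3-uniform hypergraph H that is a longest Berge-path and, among all longest Berge-paths, minimizes x_1 + x_ℓ, where x_j denotes the number of defining hyperedges of P incident to the j-th defining vertex u_j. Then x_1 ≤ √(3(ℓ-1)) and x_ℓ ≤ √(3(ℓ-1)). -/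
open Finset

def prefixRev {n : ℕ} (m : ℕ) (hm : m ≤ n) : Equiv.Perm (Fin n) :=
  Function.Involutive.toPerm (fun j => if j.1 < m then ⟨m - 1 - j, by omega⟩ else j) <| by
    intro j
    dsimp only
    split_ifs <;> simp_all [Fin.ext_iff] <;> omega

@[simp]
lemma prefixRev_val {n m : ℕ} (hm : m ≤ n) (j : Fin n) :
    (prefixRev m hm j : ℕ) = if (j : ℕ) < m then m - 1 - j else j := by
  change Fin.val (if (j : ℕ) < m then (⟨m - 1 - j, by omega⟩ : Fin n) else j) = _
  split_ifs <;> rfl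

section

variable {V : Type*}

section BergePath

variable {H : Finset (Finset V)} {t : ℕ} {v : Fin (t + 1) → V} {e : Fin t → Finset V}

lemma IsBergePath.comp_perm (hP : IsBergePath H t v e) (σ : Equiv.Perm (Fin (t + 1)))
    (τ : Equiv.Perm (Fin t))
    (hinc : ∀ j, v (σ j.castSucc) ∈ e (τ j) ∧ v (σ j.succ) ∈ e (τ j)) :
    IsBergePath H t (v ∘ σ) (e ∘ τ) :=
  ⟨hP.1.comp σ.injective, hP.2.1.comp τ.injective, fun _ => hP.2.2.1 _, hinc⟩

lemma IsBergePath.reverse (hP : IsBergePath H t v e) :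
    IsBergePath H t (v ∘ Fin.revPerm) (e ∘ Fin.revPerm) :=
  hP.comp_perm _ _ fun j => by
    simpa [Fin.rev_castSucc, Fin.rev_succ, and_comm] using hP.2.2.2 j.rev

lemma IsBergePath.rotate (hP : IsBergePath H t v e) (i : Fin t) (hi : v 0 ∈ e i) :
    IsBergePath H t (v ∘ prefixRev (i + 1) (by omega)) (e ∘ prefixRev i i.2.le) := by
  have mem : ∀ j a, (a = j.castSucc ∨ a = j.succ ∨ (a = 0 ∧ j = i)) → v a ∈ e j := by
    rintro j a (rfl | rfl | ⟨rfl, rfl⟩)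
    exacts [(hP.2.2.2 j).1, (hP.2.2.2 j).2, hi]
  refine hP.comp_perm _ _ fun j => ⟨mem _ _ ?_, mem _ _ ?_⟩ <;>
  · simp only [Fin.ext_iff, prefixRev_val, Fin.val_castSucc, Fin.val_succ, Fin.val_zero]
    split_ifs <;> omega

end BergePath

variable [DecidableEq V]

def bergeDegree {ι : Type*} [Fintype ι] (e : ι → Finset V) (x : V) : ℕ :=
  #{i | x ∈ e i}

lemma bergeDegree_comp_perm {ι : Type*} [Fintype ι] (e : ι → Finset V) (τ : Equiv.Perm ι)
    (x : V) : bergeDegree (e ∘ τ) x = bergeDegree e x := by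
  unfold bergeDegree
  rw [← card_map τ.toEmbedding, map_filter, map_univ_equiv]
  simp

lemma sum_bergeDegree_le {ι : Type*} [Fintype ι] (e : ι → Finset V) (S : Finset V) :
    ∑ x ∈ S, bergeDegree e x ≤ ∑ i, #(e i) := by
  calc ∑ x ∈ S, bergeDegree e x
      = ∑ i, #(S.bipartiteBelow (fun x i => x ∈ e i) i) :=
        sum_card_bipartiteAbove_eq_sum_card_bipartiteBelow _
    _ ≤ ∑ i, #(e i) := sum_le_sum fun i _ => card_le_card fun x hx => (mem_filter.1 hx).2

def IsEndpointDegreeMinimal (H : Finset (Finset V)) (t : ℕ) (v : Fin (t + 1) → V)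
    (e : Fin t → Finset V) : Prop :=
  ∀ v' e', IsBergePath H t v' e' →
    bergeDegree e (v 0) + bergeDegree e (v (Fin.last t)) ≤
      bergeDegree e' (v' 0) + bergeDegree e' (v' (Fin.last t))

section EndpointDegree

variable {H : Finset (Finset V)} {t : ℕ} {v : Fin (t + 1) → V} {e : Fin t → Finset V}

lemma IsEndpointDegreeMinimal.reverse (hmin : IsEndpointDegreeMinimal H t v e) :
    IsEndpointDegreeMinimal H t (v ∘ Fin.revPerm) (e ∘ Fin.revPerm) := fun v' e' h' => by
  simpa [bergeDegree_comp_perm, add_comm] using hmin v' e' h'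

lemma IsBergePath.bergeDegree_start_le (hP : IsBergePath H t v e)
    (hmin : IsEndpointDegreeMinimal H t v e) (i : Fin t) (hi : v 0 ∈ e i) :
    bergeDegree e (v 0) ≤ bergeDegree e (v i.castSucc) := by
  have h0 : prefixRev (i + 1) (by omega) 0 = i.castSucc := Fin.ext (by simp)
  have hlast : prefixRev (i + 1) (by omega) (Fin.last t) = Fin.last t := Fin.ext (by simp)
  have := hmin _ _ (hP.rotate i hi)
  simp only [Function.comp_apply, bergeDegree_comp_perm, h0, hlast] at this
  omega

lemma sq_bergeDegree_start_le_sum_card (hv : Function.Injective v)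
    (hdeg : ∀ i, v 0 ∈ e i → bergeDegree e (v 0) ≤ bergeDegree e (v i.castSucc)) :
    bergeDegree e (v 0) ^ 2 ≤ ∑ i, #(e i) := by
  set J : Finset (Fin t) := {i | v 0 ∈ e i}
  have hJ : #(J.image fun i => v i.castSucc) = bergeDegree e (v 0) :=
    card_image_of_injective _ (hv.comp (Fin.castSucc_injective t))
  calc bergeDegree e (v 0) ^ 2 = ∑ _x ∈ J.image fun i => v i.castSucc, bergeDegree e (v 0) := by
        rw [sum_const, hJ, smul_eq_mul, sq]
    _ ≤ ∑ x ∈ J.image fun i => v i.castSucc, bergeDegree e x := by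
        refine sum_le_sum fun x hx => ?_
        obtain ⟨i, hi, rfl⟩ := mem_image.1 hx
        exact hdeg i (mem_filter.1 hi).2
    _ ≤ ∑ i, #(e i) := sum_bergeDegree_le e _

lemma IsBergePath.sq_bergeDegree_start_le (hunif : ∀ h ∈ H, #h = 3)
    (hP : IsBergePath H t v e) (hmin : IsEndpointDegreeMinimal H t v e) :
    bergeDegree e (v 0) ^ 2 ≤ 3 * t := by
  calc bergeDegree e (v 0) ^ 2 ≤ ∑ i, #(e i) :=
        sq_bergeDegree_start_le_sum_card hP.1 (hP.bergeDegree_start_le hmin)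
    _ = 3 * t := by simp [hunif _ (hP.2.2.1 _), mul_comm]

end EndpointDegree

end

theorem endpoint_degree_bound_general {V : Type*} [DecidableEq V]
    (H : Finset (Finset V)) (ℓ : ℕ)
    (hunif : ∀ h ∈ H, h.card = 3)
    (v : Fin (ℓ - 1 + 1) → V) (e : Fin (ℓ - 1) → Finset V)
    (hP : IsBergePath H (ℓ - 1) v e)
    (hmin : ∀ (v' : Fin (ℓ - 1 + 1) → V) (e' : Fin (ℓ - 1) → Finset V),
      IsBergePath H (ℓ - 1) v' e' →
        ((Finset.univ : Finset (Fin (ℓ - 1))).filter (fun i => v 0 ∈ e i)).card +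
          ((Finset.univ : Finset (Fin (ℓ - 1))).filter
            (fun i => v (Fin.last (ℓ - 1)) ∈ e i)).card ≤
        ((Finset.univ : Finset (Fin (ℓ - 1))).filter (fun i => v' 0 ∈ e' i)).card +
          ((Finset.univ : Finset (Fin (ℓ - 1))).filter
            (fun i => v' (Fin.last (ℓ - 1)) ∈ e' i)).card) :
    ((((Finset.univ : Finset (Fin (ℓ - 1))).filter (fun i => v 0 ∈ e i)).card : ℝ) ≤
        Real.sqrt (3 * ((ℓ - 1 : ℕ) : ℝ))) ∧
      ((((Finset.univ : Finset (Fin (ℓ - 1))).filter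
          (fun i => v (Fin.last (ℓ - 1)) ∈ e i)).card : ℝ) ≤
        Real.sqrt (3 * ((ℓ - 1 : ℕ) : ℝ))) := by
  have hmin' : IsEndpointDegreeMinimal H (ℓ - 1) v e := hmin
  have hstart := hP.sq_bergeDegree_start_le hunif hmin'
  have hend := hP.reverse.sq_bergeDegree_start_le hunif hmin'.reverse
  simp only [Function.comp_apply, Fin.revPerm_apply, Fin.rev_zero, bergeDegree_comp_perm] at hend
  exact ⟨Real.le_sqrt_of_sq_le (by exact_mod_cast hstart),
    Real.le_sqrt_of_sq_le (by exact_mod_cast hend)⟩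

/-- In a 3-uniform hypergraph, if `P` is a longest Berge-path which, among all longest
Berge-paths, minimizes `x₁ + x_ℓ` (the numbers of defining hyperedges incident to its
two endpoints), then `x₁ ≤ √(3(ℓ-1))` and `x_ℓ ≤ √(3(ℓ-1))`. -/
theorem endpoint_degree_bound {V : Type*} [Fintype V] [DecidableEq V]
    (H : Finset (Finset V)) (ℓ : ℕ) (hℓ : 2 ≤ ℓ)
    (hunif : ∀ h ∈ H, h.card = 3)
    (v : Fin (ℓ - 1 + 1) → V) (e : Fin (ℓ - 1) → Finset V)
    (hP : IsBergePath H (ℓ - 1) v e)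
    (hmax : ∀ s, HasBergePath H s → s ≤ ℓ - 1)
    (hmin : ∀ (v' : Fin (ℓ - 1 + 1) → V) (e' : Fin (ℓ - 1) → Finset V),
      IsBergePath H (ℓ - 1) v' e' →
        ((Finset.univ : Finset (Fin (ℓ - 1))).filter (fun i => v 0 ∈ e i)).card +
          ((Finset.univ : Finset (Fin (ℓ - 1))).filter
            (fun i => v (Fin.last (ℓ - 1)) ∈ e i)).card ≤
        ((Finset.univ : Finset (Fin (ℓ - 1))).filter (fun i => v' 0 ∈ e' i)).card +
          ((Finset.univ : Finset (Fin (ℓ - 1))).filter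
            (fun i => v' (Fin.last (ℓ - 1)) ∈ e' i)).card) :
    ((((Finset.univ : Finset (Fin (ℓ - 1))).filter (fun i => v 0 ∈ e i)).card : ℝ) ≤
        Real.sqrt (3 * ((ℓ - 1 : ℕ) : ℝ))) ∧
      ((((Finset.univ : Finset (Fin (ℓ - 1))).filter
          (fun i => v (Fin.last (ℓ - 1)) ∈ e i)).card : ℝ) ≤
        Real.sqrt (3 * ((ℓ - 1 : ℕ) : ℝ))) :=
  endpoint_degree_bound_general H ℓ hunif v e hP hmin
end

section
/- Let H be a hypergraph. If H contains a Berge-path u_1, f_1, u_2, ..., f_{ℓ-1}, u_ℓ of length ℓ-1, and there exist hyperedges e, e' of H, distinct from each other and from all f_j, with u_1, u_i ∈ e and u_ℓ, u_{i-1} ∈ e' for some 2 ≤ i ≤ ℓ-1, then H contains a Berge-cycle of length ℓ. -/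
/-- If `H` contains a Berge-path `u₁, f₁, …, f_{ℓ-1}, u_ℓ` of length `ℓ-1` and there
exist hyperedges `g, g'` of `H`, distinct from each other and from all the `f_j`, with
`u₁, u_i ∈ g` and `u_ℓ, u_{i-1} ∈ g'` for some `2 ≤ i ≤ ℓ-1`, then `H` contains a
Berge-cycle of length `ℓ`. -/
theorem bergeCycle_of_crossing_edges {V : Type*} [DecidableEq V]
    (H : Finset (Finset V)) (ℓ i : ℕ) (hℓ : 3 ≤ ℓ) (hi : 2 ≤ i) (hiℓ : i ≤ ℓ - 1)
    (v : Fin (ℓ - 1 + 1) → V) (e : Fin (ℓ - 1) → Finset V)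
    (hP : IsBergePath H (ℓ - 1) v e)
    (g g' : Finset V) (hg : g ∈ H) (hg' : g' ∈ H) (hgg : g ≠ g')
    (hge : ∀ j, g ≠ e j) (hg'e : ∀ j, g' ≠ e j)
    (h1 : v 0 ∈ g) (h2 : v ⟨i - 1, by omega⟩ ∈ g)
    (h3 : v (Fin.last (ℓ - 1)) ∈ g') (h4 : v ⟨i - 2, by omega⟩ ∈ g') :
    HasBergeCycle H ℓ := by

  obtain ⟨hvinj, heinj, heH, hinc⟩ := hP
  have hmem1 : ∀ (a b : ℕ) (ha : a < ℓ) (hb : b < ℓ - 1), a = b ∨ a = b + 1 →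
      v ⟨a, by omega⟩ ∈ e ⟨b, hb⟩ := by
    rintro a b ha hb (rfl | rfl)
    · exact (hinc ⟨a, hb⟩).1
    · exact (hinc ⟨b, hb⟩).2
  have hmg : ∀ (a : ℕ) (ha : a < ℓ), a = 0 ∨ a = i - 1 → v ⟨a, by omega⟩ ∈ g := by
    rintro a ha (rfl | rfl)
    · have h0 : (⟨0, by omega⟩ : Fin (ℓ - 1 + 1)) = 0 := rfl
      rw [h0]; exact h1
    · exact h2
  have hmg' : ∀ (a : ℕ) (ha : a < ℓ), a = ℓ - 1 ∨ a = i - 2 → v ⟨a, by omega⟩ ∈ g' := by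
    rintro a ha (rfl | rfl)
    · exact h3
    · exact h4
  refine ⟨fun k => if h : k.1 ≤ i - 2 then v ⟨k.1, by omega⟩
      else v ⟨ℓ + i - 2 - k.1, by have := k.2; omega⟩,
    fun k => if h : k.1 < i - 2 then e ⟨k.1, by omega⟩
      else if hb : k.1 = i - 2 then g'
      else if hc : k.1 = ℓ - 1 then g
      else e ⟨ℓ + i - 3 - k.1, by have := k.2; omega⟩, ?_, ?_, ?_, ?_⟩
  · intro k k' hkk
    have hk := k.2; have hk' := k'.2
    dsimp only at hkk
    split_ifs at hkk
    all_goals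
      have := Fin.mk_eq_mk.mp (hvinj hkk)
    all_goals
      exact Fin.ext (by omega)
  · intro k k' hkk
    have hk := k.2; have hk' := k'.2
    dsimp only at hkk
    split_ifs at hkk
    all_goals first
      | (exact Fin.ext (by omega))
      | (exact absurd hkk (hge _))
      | (exact absurd hkk.symm (hge _))
      | (exact absurd hkk (hg'e _))
      | (exact absurd hkk.symm (hg'e _))
      | (exact absurd hkk hgg)
      | (exact absurd hkk.symm hgg)
      | (have := Fin.mk_eq_mk.mp (heinj hkk); exact Fin.ext (by omega))
  · intro k
    dsimp only
    split_ifs <;> first | exact heH _ | exact hg | exact hg'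
  · intro k
    have hk := k.2
    have hc2 : (cnext k).1 = (k.1 + 1) % ℓ := rfl
    have hc : ((cnext k).1 = 0 ∧ k.1 = ℓ - 1) ∨ ((cnext k).1 = k.1 + 1 ∧ k.1 < ℓ - 1) := by
      by_cases hkl : k.1 = ℓ - 1
      · exact Or.inl ⟨by rw [hc2, hkl, (by omega : ℓ - 1 + 1 = ℓ), Nat.mod_self], hkl⟩
      · exact Or.inr ⟨by rw [hc2, Nat.mod_eq_of_lt (by omega)], by omega⟩
    rcases hc with ⟨hc, hcl⟩ | ⟨hc, hcl⟩ <;>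
    · constructor <;>
      · dsimp only
        split_ifs
        all_goals first
          | (apply hmem1 <;> omega)
          | (apply hmg <;> omega)
          | (apply hmg' <;> omega)
end

section
/- Let r ≥ 3 and set a = ⌊(k-3)/2⌋. Then (n - a - 6)·C(a, r-1) + 3·C(a+2, r) - 2·C(a, r) + 9 < (n - a - 4)·C(a, r-1) + C(a+4, r) whenever a ≥ r ≥ 3, k is sufficiently large compared to r, and n is sufficiently large compared to k. -/
lemma le_choose_aux : ∀ j a : ℕ, 1 ≤ j → 2 * j ≤ a → a ≤ Nat.choose a j := by
  intro j
  induction j with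
  | zero => intro a h; omega
  | succ m ih =>
    intro a _ h2
    rcases Nat.eq_zero_or_pos m with hm | hm
    · subst hm; simp
    · have h1 : a ≤ a.choose m := ih a hm (by omega)
      have : a.choose m ≤ a.choose (m + 1) :=
        Nat.choose_le_succ_of_lt_half_left (by omega)
      omega

/-- For all `r ≥ 3`, all sufficiently large `k` relative to `r`, and all sufficiently
large `n`, with `a = ⌊(k-3)/2⌋ ≥ r`:
`(n - a - 6)·C(a, r-1) + 3·C(a+2, r) - 2·C(a, r) + 9 < (n - a - 4)·C(a, r-1) + C(a+4, r)`,
i.e. `|H_{n,a,2,2,2}| + 9 < |H_{n,a,4}|`. -/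
theorem H222_plus_nine_lt_H4 :
    ∀ r : ℕ, 3 ≤ r → ∃ k₀ : ℕ, ∀ k : ℕ, k₀ ≤ k → ∃ n₀ : ℕ, ∀ n : ℕ, n₀ ≤ n →
      r ≤ (k - 3) / 2 →
      (n - (k - 3) / 2 - 6) * Nat.choose ((k - 3) / 2) (r - 1)
          + 3 * Nat.choose ((k - 3) / 2 + 2) r - 2 * Nat.choose ((k - 3) / 2) r + 9 <
        (n - (k - 3) / 2 - 4) * Nat.choose ((k - 3) / 2) (r - 1)
          + Nat.choose ((k - 3) / 2 + 4) r := by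
  intro r hr
  obtain ⟨s, rfl⟩ : ∃ s, r = s + 3 := ⟨r - 3, by omega⟩
  refine ⟨4 * s + 120, fun k hk => ⟨k, fun n hn ha => ?_⟩⟩
  set a := (k - 3) / 2 with hadef
  have haa : 2 * s + 58 ≤ a := by omega
  have h1 : s + 3 - 1 = s + 2 := by omega
  rw [h1]
  have hn4 : n - a - 4 = (n - a - 6) + 2 := by omega
  rw [hn4, add_mul]
  -- Pascal expansions
  have pB : (a + 2).choose (s + 3)
      = a.choose (s + 3) + 2 * a.choose (s + 2) + a.choose (s + 1) := by
    have e1 : a + 2 = (a + 1) + 1 := rfl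
    rw [e1, Nat.succ_sub_one] at *
    rw [Nat.choose_succ_succ (a + 1) (s + 2), Nat.choose_succ_succ a (s + 2),
      Nat.choose_succ_succ a (s + 1)]
    ring
  have pD : (a + 4).choose (s + 3)
      = (a + 2).choose (s + 3) + 2 * (a + 2).choose (s + 2) + (a + 2).choose (s + 1) := by
    rw [show a + 4 = (a + 3) + 1 from rfl, Nat.choose_succ_succ (a + 3) (s + 2),
      show a + 3 = (a + 2) + 1 from rfl, Nat.choose_succ_succ (a + 2) (s + 2),
      Nat.choose_succ_succ (a + 2) (s + 1)]
    ring
  have pB' : (a + 2).choose (s + 2)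
      = a.choose (s + 2) + 2 * a.choose (s + 1) + a.choose s := by
    rw [show a + 2 = (a + 1) + 1 from rfl, Nat.choose_succ_succ (a + 1) (s + 1),
      Nat.choose_succ_succ a (s + 1), Nat.choose_succ_succ a s]
    ring
  have hC2 : a ≤ a.choose (s + 1) := le_choose_aux (s + 1) a (by omega) (by omega)
  have key : 3 * (a + 2).choose (s + 3) + 9
      < 2 * a.choose (s + 2) + (a + 4).choose (s + 3) + 2 * a.choose (s + 3) := by
    rw [pD, pB, pB']
    have : (a + 2).choose (s + 1) ≥ 0 := Nat.zero_le _
    omega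
  have hsub : 2 * a.choose (s + 3) ≤
      (n - a - 6) * a.choose (s + 2) + 3 * (a + 2).choose (s + 3) := by
    have : a.choose (s + 3) ≤ (a + 2).choose (s + 3) :=
      Nat.choose_le_choose _ (by omega)
    omega
  omega
end

section
/- Let k ≥ 2 and n ≥ k. The r-uniform hypergraph H_{n,⌊(k-1)/2⌋} (with t = 0 blocks B_i) contains no Berge-path of length k when k is odd, and H_{n,⌊(k-1)/2⌋,2} contains no Berge-path of length k when k is even. -/
/-- The hypergraph `H_{n,a}`: hyperedges are all `r`-subsets of `A` together with all
sets `{c} ∪ A'` for `c ∉ A` and `A'` an `(r-1)`-subset of `A`. -/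
def HnaEdges {V : Type*} [Fintype V] [DecidableEq V] (r : ℕ) (A : Finset V) :
    Finset (Finset V) :=
  A.powersetCard r ∪
    Aᶜ.biUnion (fun c => (A.powersetCard (r - 1)).image (fun A' => insert c A'))

/-- The hypergraph `H_{n,a,2}`: hyperedges are all `r`-subsets of `A ∪ B` (with
`|B| = 2`) together with all sets `{c} ∪ A'` for `c ∉ A ∪ B` and `A'` an
`(r-1)`-subset of `A`. -/
def Hna2Edges {V : Type*} [Fintype V] [DecidableEq V] (r : ℕ) (A B : Finset V) :
    Finset (Finset V) :=
  (A ∪ B).powersetCard r ∪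
    (A ∪ B)ᶜ.biUnion (fun c => (A.powersetCard (r - 1)).image (fun A' => insert c A'))
/-!
A vertex outside `S` lies only in hyperedges contained in `A` plus itself, so along a Berge path
its neighbours lie in `A`. Sending each outside position to the next one (or, once a position in
`S \ A` is fixed, to the neighbour facing it) shows that outside positions are at most one more
than `A`-positions, and no more than them if the path meets `S \ A`. Hence a path has at most
`2|A| + max 1 |S \ A|` vertices. Take `S = A` for `H_{n,a}` and `S = A ∪ B` for `H_{n,a,2}`;
with `a = ⌊(k-1)/2⌋` both bounds equal `k`.
-/

open Finset

section Positions

variable (O P : Finset ℕ)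

theorem card_le_card_add_one_of_succ_mem (k : ℕ) (hO : ∀ i ∈ O, i ≤ k)
    (hsucc : ∀ i ∈ O, i < k → i + 1 ∈ P) : #O ≤ #P + 1 := by
  have hsub : (O.erase k).image (· + 1) ⊆ P := by
    intro j hj
    obtain ⟨i, hi, rfl⟩ := mem_image.mp hj
    obtain ⟨hik, hiO⟩ := mem_erase.mp hi
    exact hsucc i hiO (lt_of_le_of_ne (hO i hiO) hik)
  calc #O ≤ #(O.erase k) + 1 := by have := pred_card_le_card_erase (s := O) (a := k); omega
    _ = #((O.erase k).image (· + 1)) + 1 := by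
      rw [card_image_of_injective _ (add_left_injective 1)]
    _ ≤ #P + 1 := by gcongr

theorem card_le_card_of_succ_pred_mem (p : ℕ) (hpO : p ∉ O) (hpP : p ∉ P)
    (hsucc : ∀ i ∈ O, i < p → i + 1 ∈ P) (hpred : ∀ i ∈ O, p < i → i - 1 ∈ P) :
    #O ≤ #P := by
  have hne : ∀ i ∈ O, i ≠ p := fun i hi h => hpO (h ▸ hi)
  refine card_le_card_of_injOn (fun i => if i < p then i + 1 else i - 1) ?_ ?_
  · intro i hi
    have := hne i hi
    by_cases h : i < p
    · simpa [h] using hsucc i hi h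
    · simpa [h] using hpred i hi (by omega)
  · intro i hi j hj hij
    have hip := hne i hi
    have hjp := hne j hj
    -- the images of positions before `p` stay before `p`, those after `p` stay after it
    have hlt : ∀ m ∈ O, m < p → m + 1 ≠ p := fun m hm hmp h => hpP (h ▸ hsucc m hm hmp)
    have hgt : ∀ m ∈ O, p < m → m - 1 ≠ p := fun m hm hmp h => hpP (h ▸ hpred m hm hmp)
    simp only at hij
    split_ifs at hij with h₁ h₂ h₂
    · omega
    · have := hlt i hi h₁; have := hgt j hj (by omega); omega
    · have := hlt j hj h₂; have := hgt i hi (by omega); omega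
    · omega

end Positions

theorem succ_le_of_injOn_of_adj {V : Type*} [DecidableEq V] {H : Finset (Finset V)}
    {A S : Finset V} (hH : ∀ f ∈ H, ∀ x ∈ f, x ∉ S → f ⊆ insert x A)
    {k : ℕ} {u : ℕ → V} (hu : Set.InjOn u (range (k + 1)))
    (hadj : ∀ i < k, ∃ f ∈ H, u i ∈ f ∧ u (i + 1) ∈ f) :
    k + 1 ≤ 2 * #A + max 1 #(S \ A) := by
  set O := (range (k + 1)).filter (u · ∉ S)
  set P := (range (k + 1)).filter (u · ∈ A)
  set Q := (range (k + 1)).filter (u · ∈ S \ A)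
  have hne : ∀ i < k, u i ≠ u (i + 1) := fun i hi h =>
    absurd (hu (by simp; omega) (by simp; omega) h) (by omega)
  have hOk : ∀ i ∈ O, i ≤ k := fun i hi =>
    Nat.lt_succ_iff.mp (mem_range.mp (mem_filter.mp hi).1)
  have hsucc : ∀ i ∈ O, i < k → i + 1 ∈ P := by
    intro i hi hik
    obtain ⟨f, hf, hi₀, hi₁⟩ := hadj i hik
    have hiS := (mem_filter.mp hi).2
    simpa [P, hik] using mem_of_mem_insert_of_ne (hH f hf _ hi₀ hiS hi₁) (hne i hik).symm
  have hpred : ∀ i ∈ O, 0 < i → i - 1 ∈ P := by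
    intro i hi hi0
    obtain ⟨j, rfl⟩ : ∃ j, i = j + 1 := ⟨i - 1, by omega⟩
    have hjk : j < k := by have := hOk _ hi; omega
    obtain ⟨f, hf, hj₀, hj₁⟩ := hadj j hjk
    have hjS := (mem_filter.mp hi).2
    simpa [P, show j < k + 1 by omega] using
      mem_of_mem_insert_of_ne (hH f hf _ hj₁ hjS hj₀) (hne j hjk)
  have hcover : k + 1 ≤ #O + #P + #Q := calc
    k + 1 = #(range (k + 1)) := (card_range _).symm
    _ ≤ #(O ∪ P ∪ Q) := card_le_card fun i hi => by
      simp only [O, P, Q, mem_union, mem_filter, mem_sdiff]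
      tauto
    _ ≤ #O + #P + #Q := (card_union_le _ _).trans (by gcongr; exact card_union_le _ _)
  have hP : #P ≤ #A := card_le_card_of_injOn u (fun i hi => (mem_filter.mp hi).2)
    (hu.mono (coe_subset.mpr (filter_subset _ _)))
  have hQ : #Q ≤ #(S \ A) := card_le_card_of_injOn u (fun i hi => (mem_filter.mp hi).2)
    (hu.mono (coe_subset.mpr (filter_subset _ _)))
  rcases Q.eq_empty_or_nonempty with hQ₀ | ⟨p, hp⟩
  · have := card_le_card_add_one_of_succ_mem O P k hOk hsucc
    rw [hQ₀, card_empty] at hcover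
    omega
  · obtain ⟨hpk, hpS, hpA⟩ : p < k + 1 ∧ u p ∈ S ∧ u p ∉ A := by simpa [Q] using hp
    have := card_le_card_of_succ_pred_mem O P p (by simp [O, hpS]) (by simp [P, hpA])
      (fun i hi hip => hsucc i hi (by omega)) (fun i hi hip => hpred i hi (by omega))
    omega

theorem HasBergePath.succ_le {V : Type*} [DecidableEq V] {H : Finset (Finset V)} {k : ℕ}
    (hpath : HasBergePath H k) {A S : Finset V}
    (hH : ∀ f ∈ H, ∀ x ∈ f, x ∉ S → f ⊆ insert x A) :
    k + 1 ≤ 2 * #A + max 1 #(S \ A) := by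
  obtain ⟨v, e, hv, -, he, hinc⟩ := hpath
  have hofNat : ∀ i (hi : i < k + 1), Fin.ofNat (k + 1) i = ⟨i, hi⟩ := fun i hi =>
    Fin.ext (Nat.mod_eq_of_lt hi)
  refine succ_le_of_injOn_of_adj (u := fun i => v (Fin.ofNat (k + 1) i)) hH ?_ ?_
  · intro i hi j hj hij
    simp only [coe_range, Set.mem_Iio] at hi hj
    have := hv hij
    rw [hofNat i hi, hofNat j hj] at this
    exact Fin.mk.inj this
  · intro i hi
    refine ⟨e ⟨i, hi⟩, he _, ?_, ?_⟩
    · show v (Fin.ofNat (k + 1) i) ∈ _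
      rw [hofNat i (by omega)]
      exact (hinc ⟨i, hi⟩).1
    · show v (Fin.ofNat (k + 1) (i + 1)) ∈ _
      rw [hofNat (i + 1) (by omega)]
      exact (hinc ⟨i, hi⟩).2

theorem subset_insert_of_mem_HnaEdges {V : Type*} [Fintype V] [DecidableEq V] {r : ℕ}
    {A f : Finset V} {x : V} (hf : f ∈ HnaEdges r A) (hx : x ∈ f) (hxA : x ∉ A) :
    f ⊆ insert x A := by
  simp only [HnaEdges, mem_union, mem_biUnion, mem_powersetCard, mem_image] at hf
  rcases hf with ⟨hfA, -⟩ | ⟨c, -, A', ⟨hA'A, -⟩, rfl⟩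
  · exact absurd (hfA hx) hxA
  · obtain rfl : x = c := (mem_insert.mp hx).resolve_right fun h => hxA (hA'A h)
    exact insert_subset_insert _ hA'A

theorem subset_insert_of_mem_Hna2Edges {V : Type*} [Fintype V] [DecidableEq V] {r : ℕ}
    {A B f : Finset V} {x : V} (hf : f ∈ Hna2Edges r A B) (hx : x ∈ f) (hxAB : x ∉ A ∪ B) :
    f ⊆ insert x A := by
  simp only [Hna2Edges, mem_union, mem_biUnion, mem_powersetCard, mem_image] at hf
  rcases hf with ⟨hfAB, -⟩ | ⟨c, -, A', ⟨hA'A, -⟩, rfl⟩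
  · exact absurd (hfAB hx) hxAB
  · obtain rfl : x = c :=
      (mem_insert.mp hx).resolve_right fun h => hxAB (mem_union_left B (hA'A h))
    exact insert_subset_insert _ hA'A

theorem Hna_no_long_bergePath_general {V : Type*} [Fintype V] [DecidableEq V]
    (k r : ℕ) (hk : 2 ≤ k)
    (A B : Finset V) (hA : A.card = (k - 1) / 2) (hB : B.card = 2)
    (hAB : Disjoint A B) :
    (Odd k → ¬ HasBergePath (HnaEdges r A) k) ∧
      (Even k → ¬ HasBergePath (Hna2Edges r A B) k) := by
  constructor
  · rintro ⟨m, rfl⟩ hpath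
    have := hpath.succ_le fun _ hf _ => subset_insert_of_mem_HnaEdges hf
    rw [sdiff_self, bot_eq_empty, card_empty] at this
    omega
  · rintro ⟨m, rfl⟩ hpath
    have := hpath.succ_le fun _ hf _ => subset_insert_of_mem_Hna2Edges hf
    rw [union_sdiff_cancel_left hAB, hB] at this
    omega

/-- For `k ≥ 2` and `n ≥ k`: if `k` is odd then `H_{n,⌊(k-1)/2⌋}` contains no
Berge-path of length `k`, and if `k` is even then `H_{n,⌊(k-1)/2⌋,2}` contains no
Berge-path of length `k`. -/
theorem Hna_no_long_bergePath {V : Type*} [Fintype V] [DecidableEq V]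
    (n k r : ℕ) (hk : 2 ≤ k) (hkn : k ≤ n) (hr : 2 ≤ r)
    (hcard : Fintype.card V = n)
    (A B : Finset V) (hA : A.card = (k - 1) / 2) (hB : B.card = 2)
    (hAB : Disjoint A B) :
    (Odd k → ¬ HasBergePath (HnaEdges r A) k) ∧
      (Even k → ¬ HasBergePath (Hna2Edges r A B) k) :=
  Hna_no_long_bergePath_general k r hk A B hA hB hAB
end
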